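/- arXiv:2107.11680 — 15 statements merged into one kernel-verified Lean document; each statement's English description precedes it below -/
import Mathlib

section
/- Let n be a positive integer, α, β ∈ ℂ, and suppose p, q ∈ Mat_n(ℂ) satisfy the residue equations. If Δ = α² + β² + αβ + 3(α + β + 1) ≠ 0, then p·[p,q] = μ₁·[p,q], [p,q]·p = μ₂·[p,q], q·[p,q] = μ₃·[p,q], and [p,q]·q = μ₄·[p,q], where μ₁ = −α(3+α+2β)/(2Δ), μ₂ = −(2+α)(3+α+2β)/(2Δ), μ₃ = −β(3+β+2α)/(2Δ), μ₄ = −(2+β)(3+β+2α)/(2Δ). -/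
private lemma solve_smul {N : Type*} [AddCommGroup N] [Module ℂ N] {Δ ν μ : ℂ}
    (hΔ : Δ ≠ 0) {X c : N} (h : (2 * Δ) • X + ν • c = 0) (hμ : μ = -ν / (2 * Δ)) :
    X = μ • c := by
  have h2 : (2 * Δ) ≠ 0 := mul_ne_zero two_ne_zero hΔ
  have hX : (2 * Δ) • X = (-ν) • c := by
    rw [neg_smul]; exact eq_neg_of_add_eq_zero_left h
  have hcoef : (2 * Δ)⁻¹ * (-ν) = μ := by
    rw [hμ]; field_simp
  calc X = ((2 * Δ)⁻¹ * (2 * Δ)) • X := by rw [inv_mul_cancel₀ h2, one_smul]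
    _ = (2 * Δ)⁻¹ • ((2 * Δ) • X) := by rw [mul_smul]
    _ = ((2 * Δ)⁻¹ * (-ν)) • c := by rw [hX, smul_smul]
    _ = μ • c := by rw [hcoef]

/-- If `p, q` satisfy the residue equations and `Δ ≠ 0`, then
`p·[p,q] = μ₁·[p,q]`, `[p,q]·p = μ₂·[p,q]`, `q·[p,q] = μ₃·[p,q]`, `[p,q]·q = μ₄·[p,q]`. -/
theorem residue_commutator_relations (n : ℕ) (hn : 0 < n) (α β Δ μ₁ μ₂ μ₃ μ₄ : ℂ)
    (hΔdef : Δ = α ^ 2 + β ^ 2 + α * β + 3 * (α + β + 1)) (hΔ : Δ ≠ 0)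
    (hμ₁ : μ₁ = -(α * (3 + α + 2 * β)) / (2 * Δ))
    (hμ₂ : μ₂ = -((2 + α) * (3 + α + 2 * β)) / (2 * Δ))
    (hμ₃ : μ₃ = -(β * (3 + β + 2 * α)) / (2 * Δ))
    (hμ₄ : μ₄ = -((2 + β) * (3 + β + 2 * α)) / (2 * Δ))
    (p q : Matrix (Fin n) (Fin n) ℂ)
    (hp : -p ^ 2 + 2 * (p * q) + α • (p * q - q * p) + p = 0)
    (hq : -q ^ 2 + 2 * (q * p) + β • (q * p - p * q) + q = 0) :
    p * (p * q - q * p) = μ₁ • (p * q - q * p) ∧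
    (p * q - q * p) * p = μ₂ • (p * q - q * p) ∧
    q * (p * q - q * p) = μ₃ • (p * q - q * p) ∧
    (p * q - q * p) * q = μ₄ • (p * q - q * p) := by
  have key1 : (2 * Δ) • (p * (p * q - q * p)) + (α * (3 + α + 2 * β)) • (p * q - q * p) =
      (3 + 2 * α + 3 * β + α * β + β ^ 2) •
        (p * (-p ^ 2 + 2 * (p * q) + α • (p * q - q * p) + p)
          - (-p ^ 2 + 2 * (p * q) + α • (p * q - q * p) + p) * p)
      + (-(α * (1 + β))) •
        (q * (-p ^ 2 + 2 * (p * q) + α • (p * q - q * p) + p)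
          - (-p ^ 2 + 2 * (p * q) + α • (p * q - q * p) + p) * q)
      + (α * (2 + α + β)) •
        (p * (-q ^ 2 + 2 * (q * p) + β • (q * p - p * q) + q)
          - (-q ^ 2 + 2 * (q * p) + β • (q * p - p * q) + q) * p)
      + (-(α * (1 + α))) •
        (q * (-q ^ 2 + 2 * (q * p) + β • (q * p - p * q) + q)
          - (-q ^ 2 + 2 * (q * p) + β • (q * p - p * q) + q) * q) := by
    simp only [hΔdef, pow_two, two_mul, smul_sub, smul_add, sub_mul, mul_sub, add_mul, mul_add,
      smul_mul_assoc, mul_smul_comm, neg_mul, mul_neg, smul_neg, neg_neg, one_mul, mul_one,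
      mul_assoc]
    module
  have key2 : (2 * Δ) • ((p * q - q * p) * p) + ((2 + α) * (3 + α + 2 * β)) • (p * q - q * p) =
      (1 + α * β + 3 * β + β ^ 2) •
        (p * (-p ^ 2 + 2 * (p * q) + α • (p * q - q * p) + p)
          - (-p ^ 2 + 2 * (p * q) + α • (p * q - q * p) + p) * p)
      + (-((2 + α) * (1 + β))) •
        (q * (-p ^ 2 + 2 * (p * q) + α • (p * q - q * p) + p)
          - (-p ^ 2 + 2 * (p * q) + α • (p * q - q * p) + p) * q)
      + ((2 + α) * (2 + α + β)) •
        (p * (-q ^ 2 + 2 * (q * p) + β • (q * p - p * q) + q)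
          - (-q ^ 2 + 2 * (q * p) + β • (q * p - p * q) + q) * p)
      + (-((1 + α) * (2 + α))) •
        (q * (-q ^ 2 + 2 * (q * p) + β • (q * p - p * q) + q)
          - (-q ^ 2 + 2 * (q * p) + β • (q * p - p * q) + q) * q) := by
    simp only [hΔdef, pow_two, two_mul, smul_sub, smul_add, sub_mul, mul_sub, add_mul, mul_add,
      smul_mul_assoc, mul_smul_comm, neg_mul, mul_neg, smul_neg, neg_neg, one_mul, mul_one,
      mul_assoc]
    module
  have key3 : (2 * Δ) • (q * (p * q - q * p)) + (β * (3 + β + 2 * α)) • (p * q - q * p) =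
      (β * (1 + β)) •
        (p * (-p ^ 2 + 2 * (p * q) + α • (p * q - q * p) + p)
          - (-p ^ 2 + 2 * (p * q) + α • (p * q - q * p) + p) * p)
      + (-(β * (2 + α + β))) •
        (q * (-p ^ 2 + 2 * (p * q) + α • (p * q - q * p) + p)
          - (-p ^ 2 + 2 * (p * q) + α • (p * q - q * p) + p) * q)
      + (β * (1 + α)) •
        (p * (-q ^ 2 + 2 * (q * p) + β • (q * p - p * q) + q)
          - (-q ^ 2 + 2 * (q * p) + β • (q * p - p * q) + q) * p)
      + (-(3 + 3 * α + α ^ 2 + 2 * β + α * β)) •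
        (q * (-q ^ 2 + 2 * (q * p) + β • (q * p - p * q) + q)
          - (-q ^ 2 + 2 * (q * p) + β • (q * p - p * q) + q) * q) := by
    simp only [hΔdef, pow_two, two_mul, smul_sub, smul_add, sub_mul, mul_sub, add_mul, mul_add,
      smul_mul_assoc, mul_smul_comm, neg_mul, mul_neg, smul_neg, neg_neg, one_mul, mul_one,
      mul_assoc]
    module
  have key4 : (2 * Δ) • ((p * q - q * p) * q) + ((2 + β) * (3 + β + 2 * α)) • (p * q - q * p) =
      ((1 + β) * (2 + β)) •
        (p * (-p ^ 2 + 2 * (p * q) + α • (p * q - q * p) + p)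
          - (-p ^ 2 + 2 * (p * q) + α • (p * q - q * p) + p) * p)
      + (-((2 + β) * (2 + α + β))) •
        (q * (-p ^ 2 + 2 * (p * q) + α • (p * q - q * p) + p)
          - (-p ^ 2 + 2 * (p * q) + α • (p * q - q * p) + p) * q)
      + ((1 + α) * (2 + β)) •
        (p * (-q ^ 2 + 2 * (q * p) + β • (q * p - p * q) + q)
          - (-q ^ 2 + 2 * (q * p) + β • (q * p - p * q) + q) * p)
      + (-(1 + 3 * α + α ^ 2 + α * β)) •
        (q * (-q ^ 2 + 2 * (q * p) + β • (q * p - p * q) + q)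
          - (-q ^ 2 + 2 * (q * p) + β • (q * p - p * q) + q) * q) := by
    simp only [hΔdef, pow_two, two_mul, smul_sub, smul_add, sub_mul, mul_sub, add_mul, mul_add,
      smul_mul_assoc, mul_smul_comm, neg_mul, mul_neg, smul_neg, neg_neg, one_mul, mul_one,
      mul_assoc]
    module
  rw [hp, hq] at key1 key2 key3 key4
  simp only [mul_zero, zero_mul, sub_zero, zero_sub, neg_zero, smul_zero, add_zero,
    zero_add] at key1 key2 key3 key4
  exact ⟨solve_smul hΔ key1 hμ₁, solve_smul hΔ key2 hμ₂,
    solve_smul hΔ key3 hμ₃, solve_smul hΔ key4 hμ₄⟩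
end

section
/- Let n be a positive integer, α, β ∈ ℂ, and suppose p, q ∈ Mat_n(ℂ) satisfy the residue equations. If Δ = α² + β² + αβ + 3(α + β + 1) ≠ 0, then the commutator [p,q] = pq − qp satisfies [p,q]² = 0. -/
set_option maxHeartbeats 4000000

/-- If `p, q` satisfy the residue equations and `Δ ≠ 0`,
then the commutator `[p,q] = pq − qp` satisfies `[p,q]² = 0`. -/
theorem residue_commutator_sq_zero (n : ℕ) (hn : 0 < n) (α β : ℂ)
    (hΔ : α ^ 2 + β ^ 2 + α * β + 3 * (α + β + 1) ≠ 0)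
    (p q : Matrix (Fin n) (Fin n) ℂ)
    (hp : -p ^ 2 + 2 * (p * q) + α • (p * q - q * p) + p = 0)
    (hq : -q ^ 2 + 2 * (q * p) + β • (q * p - p * q) + q = 0) :
    (p * q - q * p) ^ 2 = 0 := by
  have key : (α ^ 2 + β ^ 2 + α * β + 3 * (α + β + 1)) • ((p * q - q * p) ^ 2) =
      ((1/2) + (-1/4)*β + (-1/4)*β^2 : ℂ) • ((-p ^ 2 + 2 * (p * q) + α • (p * q - q * p) + p) * p) +
      ((-1) + (-1/2)*β + (-1/2)*α + (-1/4)*α*β : ℂ) • ((-q ^ 2 + 2 * (q * p) + β • (q * p - p * q) + q) * p) +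
      ((-1) + (-1/2)*β + (-1/2)*α + (-1/4)*α*β : ℂ) • ((-p ^ 2 + 2 * (p * q) + α • (p * q - q * p) + p) * q) +
      ((1/2) + (-1/4)*α + (-1/4)*α^2 : ℂ) • ((-q ^ 2 + 2 * (q * p) + β • (q * p - p * q) + q) * q) +
      ((1) + (3/2)*β + (1/2)*β^2 : ℂ) • ((-p ^ 2 + 2 * (p * q) + α • (p * q - q * p) + p) * p * p) +
      ((1) + (1/2)*β + (1)*α + (1/2)*α*β : ℂ) • ((-q ^ 2 + 2 * (q * p) + β • (q * p - p * q) + q) * p * p) +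
      ((-1/2) + (-3/2)*β + (-1/2)*β^2 + (-1/2)*α*β : ℂ) • ((-p ^ 2 + 2 * (p * q) + α • (p * q - q * p) + p) * p * q) +
      ((-2) + (-1)*β + (-2)*α + (-1/2)*α*β + (-1/2)*α^2 : ℂ) • ((-q ^ 2 + 2 * (q * p) + β • (q * p - p * q) + q) * p * q) +
      ((-2) + (-2)*β + (-1/2)*β^2 + (-1)*α + (-1/2)*α*β : ℂ) • ((-p ^ 2 + 2 * (p * q) + α • (p * q - q * p) + p) * q * p) +
      ((-1/2) + (-3/2)*α + (-1/2)*α*β + (-1/2)*α^2 : ℂ) • ((-q ^ 2 + 2 * (q * p) + β • (q * p - p * q) + q) * q * p) +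
      ((1) + (1)*β + (1/2)*α + (1/2)*α*β : ℂ) • ((-p ^ 2 + 2 * (p * q) + α • (p * q - q * p) + p) * q * q) +
      ((1) + (3/2)*α + (1/2)*α^2 : ℂ) • ((-q ^ 2 + 2 * (q * p) + β • (q * p - p * q) + q) * q * q) +
      ((-1/2) + (1/4)*β + (1/4)*β^2 : ℂ) • (p * (-p ^ 2 + 2 * (p * q) + α • (p * q - q * p) + p)) +
      ((1) + (1/2)*β + (1/2)*α + (1/4)*α*β : ℂ) • (p * (-q ^ 2 + 2 * (q * p) + β • (q * p - p * q) + q)) +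
      ((-1) + (-3/2)*β + (-1/2)*β^2 : ℂ) • (p * (-p ^ 2 + 2 * (p * q) + α • (p * q - q * p) + p) * p) +
      ((-1) + (-1/2)*β + (-1)*α + (-1/2)*α*β : ℂ) • (p * (-q ^ 2 + 2 * (q * p) + β • (q * p - p * q) + q) * p) +
      ((1/2) + (3/2)*β + (1/2)*β^2 + (1/2)*α*β : ℂ) • (p * (-p ^ 2 + 2 * (p * q) + α • (p * q - q * p) + p) * q) +
      ((2) + (1)*β + (2)*α + (1/2)*α*β + (1/2)*α^2 : ℂ) • (p * (-q ^ 2 + 2 * (q * p) + β • (q * p - p * q) + q) * q) +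
      ((1) + (1/2)*β + (1/2)*α + (1/4)*α*β : ℂ) • (q * (-p ^ 2 + 2 * (p * q) + α • (p * q - q * p) + p)) +
      ((-1/2) + (1/4)*α + (1/4)*α^2 : ℂ) • (q * (-q ^ 2 + 2 * (q * p) + β • (q * p - p * q) + q)) +
      ((2) + (2)*β + (1/2)*β^2 + (1)*α + (1/2)*α*β : ℂ) • (q * (-p ^ 2 + 2 * (p * q) + α • (p * q - q * p) + p) * p) +
      ((1/2) + (3/2)*α + (1/2)*α*β + (1/2)*α^2 : ℂ) • (q * (-q ^ 2 + 2 * (q * p) + β • (q * p - p * q) + q) * p) +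
      ((-1) + (-1)*β + (-1/2)*α + (-1/2)*α*β : ℂ) • (q * (-p ^ 2 + 2 * (p * q) + α • (p * q - q * p) + p) * q) +
      ((-1) + (-3/2)*α + (-1/2)*α^2 : ℂ) • (q * (-q ^ 2 + 2 * (q * p) + β • (q * p - p * q) + q) * q) := by
    simp only [pow_two, mul_add, add_mul, mul_sub, sub_mul, smul_add, smul_sub, smul_smul,
      mul_smul_comm, smul_mul_assoc, neg_mul, mul_neg, smul_neg, mul_assoc, two_mul]
    module
  rw [hp, hq] at key
  simp only [zero_mul, mul_zero, smul_zero, add_zero, zero_add] at key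
  exact (smul_eq_zero.mp key).resolve_left hΔ
end

section
/- Let n be a positive integer, α, β ∈ ℂ, and suppose p, q ∈ Mat_n(ℂ) satisfy the residue equations. If Δ = α² + β² + αβ + 3(α + β + 1) = 0, then p and q commute: pq = qp. -/
/-- If `p, q` satisfy the residue equations and `Δ = 0`, then `p` and `q` commute. -/
theorem residue_delta_zero_commute (n : ℕ) (hn : 0 < n) (α β : ℂ)
    (hΔ : α ^ 2 + β ^ 2 + α * β + 3 * (α + β + 1) = 0)
    (p q : Matrix (Fin n) (Fin n) ℂ)
    (hp : -p ^ 2 + 2 * (p * q) + α • (p * q - q * p) + p = 0)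
    (hq : -q ^ 2 + 2 * (q * p) + β • (q * p - p * q) + q = 0) :
    p * q = q * p := by
  -- Key identity 1 : 4Δ • (p*c) = (-2α(α+2β+3)) • c  (c := pq - qp)
  have key1 : (4*(α ^ 2 + β ^ 2 + α * β + 3 * (α + β + 1))) • (p*(p*q) - p*(q*p))
      - ((-2) * (α * (α + 2*β + 3))) • (p*q - q*p)
    = (2*β^2+2*α*β+4*α+6*β+6) • (p * (-p ^ 2 + 2 * (p * q) + α • (p * q - q * p) + p)
          - (-p ^ 2 + 2 * (p * q) + α • (p * q - q * p) + p) * p)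
      + (-2*α-2*α^2) • (q * (-q ^ 2 + 2 * (q * p) + β • (q * p - p * q) + q)
          - (-q ^ 2 + 2 * (q * p) + β • (q * p - p * q) + q) * q)
      + (2*α+2*α*β) • ((-p ^ 2 + 2 * (p * q) + α • (p * q - q * p) + p) * q
          - q * (-p ^ 2 + 2 * (p * q) + α • (p * q - q * p) + p))
      + (-4*α-2*α*β-2*α^2) • ((-q ^ 2 + 2 * (q * p) + β • (q * p - p * q) + q) * p
          - p * (-q ^ 2 + 2 * (q * p) + β • (q * p - p * q) + q)) := by
    simp only [two_mul, pow_two, mul_add, add_mul, mul_sub, sub_mul, neg_mul, mul_neg,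
      smul_mul_assoc, mul_smul_comm, mul_assoc]
    module
  -- Key identity 3 : 4Δ • (q*c) = (-2β(β+2α+3)) • c
  have key3 : (4*(α ^ 2 + β ^ 2 + α * β + 3 * (α + β + 1))) • (q*(p*q) - q*(q*p))
      - ((-2) * (β * (β + 2*α + 3))) • (p*q - q*p)
    = (2*β+2*β^2) • (p * (-p ^ 2 + 2 * (p * q) + α • (p * q - q * p) + p)
          - (-p ^ 2 + 2 * (p * q) + α • (p * q - q * p) + p) * p)
      + (-6-4*β-6*α-2*α*β-2*α^2) • (q * (-q ^ 2 + 2 * (q * p) + β • (q * p - p * q) + q)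
          - (-q ^ 2 + 2 * (q * p) + β • (q * p - p * q) + q) * q)
      + (4*β+2*β^2+2*α*β) • ((-p ^ 2 + 2 * (p * q) + α • (p * q - q * p) + p) * q
          - q * (-p ^ 2 + 2 * (p * q) + α • (p * q - q * p) + p))
      + (-2*β-2*α*β) • ((-q ^ 2 + 2 * (q * p) + β • (q * p - p * q) + q) * p
          - p * (-q ^ 2 + 2 * (q * p) + β • (q * p - p * q) + q)) := by
    simp only [two_mul, pow_two, mul_add, add_mul, mul_sub, sub_mul, neg_mul, mul_neg,
      smul_mul_assoc, mul_smul_comm, mul_assoc]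
    module
  rw [hp, hq] at key1 key3
  simp only [mul_zero, zero_mul, sub_zero, smul_zero, add_zero, sub_self] at key1 key3
  rw [hΔ] at key1 key3
  simp only [mul_zero, zero_smul, zero_sub, neg_eq_zero] at key1 key3
  -- key1 : (-2 * (α * (α + 2β + 3))) • (pq - qp) = 0, similarly key3
  by_cases hA : α * (α + 2*β + 3) = 0
  · rcases mul_eq_zero.mp hA with h0 | hs
    · -- α = 0 : the scalar in key3 is nonzero
      have hs3 : (-2 : ℂ) * (β * (β + 2*α + 3)) ≠ 0 := by
        intro h
        have h6 : (6 : ℂ) = 0 := by linear_combination 2*hΔ + h + (-2*α+2*β-6)*h0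
        norm_num at h6
      rcases smul_eq_zero.mp key3 with h | h
      · exact absurd h hs3
      · exact sub_eq_zero.mp h
    · -- α + 2β + 3 = 0 : then Δ = 3(β+1)², so α = β = -1
      have hb : β = -1 := by
        have h2 : (β + 1)^2 = 0 := by linear_combination (hΔ - (α - β)*hs)/3
        have h3 : β + 1 = 0 := by
          exact pow_eq_zero_iff (two_ne_zero) |>.mp h2
        linear_combination h3
      have ha : α = -1 := by rw [hb] at hs; linear_combination hs
      rw [ha] at hp; rw [hb] at hq
      have keyS : p*q - q*p
        = (p * (-p ^ 2 + 2 * (p * q) + (-1 : ℂ) • (p * q - q * p) + p)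
            - (-p ^ 2 + 2 * (p * q) + (-1 : ℂ) • (p * q - q * p) + p) * p)
          + (q * (-q ^ 2 + 2 * (q * p) + (-1 : ℂ) • (q * p - p * q) + q)
            - (-q ^ 2 + 2 * (q * p) + (-1 : ℂ) • (q * p - p * q) + q) * q)
          + ((-p ^ 2 + 2 * (p * q) + (-1 : ℂ) • (p * q - q * p) + p) * q
            - q * (-p ^ 2 + 2 * (p * q) + (-1 : ℂ) • (p * q - q * p) + p)) := by
        simp only [two_mul, pow_two, mul_add, add_mul, mul_sub, sub_mul, neg_mul, mul_neg,
          smul_mul_assoc, mul_smul_comm, mul_assoc]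
        module
      rw [hp, hq] at keyS
      simp only [mul_zero, zero_mul, sub_zero, smul_zero, add_zero, sub_self, zero_add] at keyS
      exact sub_eq_zero.mp keyS
  · have hs1 : (-2 : ℂ) * (α * (α + 2*β + 3)) ≠ 0 :=
      mul_ne_zero (by norm_num) hA
    rcases smul_eq_zero.mp key1 with h | h
    · exact absurd h hs1
    · exact sub_eq_zero.mp h
end

section
/- Let n be a positive integer and suppose p, q ∈ Mat_n(ℂ) commute (pq = qp) and satisfy −p² + 2pq + p = 0 and −q² + 2pq + q = 0. Then p³ = p and q³ = q. -/
/-- If `p, q` commute and satisfy `−p² + 2pq + p = 0`, `−q² + 2pq + q = 0`,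
then `p³ = p` and `q³ = q`. -/
theorem residue_commuting_cube (n : ℕ) (hn : 0 < n)
    (p q : Matrix (Fin n) (Fin n) ℂ) (hcomm : p * q = q * p)
    (hp : -p ^ 2 + 2 * (p * q) + p = 0)
    (hq : -q ^ 2 + 2 * (p * q) + q = 0) :
    p ^ 3 = p ∧ q ^ 3 = q := by
  have hp2 : p ^ 2 = 2 * (p * q) + p := by
    have h : p ^ 2 - (2 * (p * q) + p) = -(-p ^ 2 + 2 * (p * q) + p) := by noncomm_ring
    rw [hp, neg_zero] at h
    exact sub_eq_zero.mp h
  have hq2 : q ^ 2 = 2 * (p * q) + q := by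
    have h : q ^ 2 - (2 * (p * q) + q) = -(-q ^ 2 + 2 * (p * q) + q) := by noncomm_ring
    rw [hq, neg_zero] at h
    exact sub_eq_zero.mp h
  have key : p ^ 2 * q = 4 * (p ^ 2 * q) + 3 * (p * q) := by
    calc p ^ 2 * q = (2 * (p * q) + p) * q := by rw [hp2]
    _ = 2 * (p * q ^ 2) + p * q := by noncomm_ring
    _ = 2 * (p * (2 * (p * q) + q)) + p * q := by rw [hq2]
    _ = 4 * (p ^ 2 * q) + 3 * (p * q) := by noncomm_ring
  set x := p ^ 2 * q + p * q with hxdef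
  have h3 : x + x + x = 0 := by
    have h : x + x + x = -(p ^ 2 * q) + (4 * (p ^ 2 * q) + 3 * (p * q)) := by
      rw [hxdef]; noncomm_ring
    rw [← key] at h
    simpa using h
  have hx : x = 0 := by
    have hsmul : (3 : ℂ) • x = x + x + x := by
      rw [show (3 : ℂ) = 1 + 1 + 1 by norm_num, add_smul, add_smul, one_smul]
    have : (3 : ℂ) • x = 0 := by rw [hsmul, h3]
    rcases smul_eq_zero.mp this with h | h
    · norm_num at h
    · exact h
  have hpq : p ^ 2 * q = -(p * q) := by
    have h := hx
    rw [hxdef] at h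
    exact eq_neg_of_add_eq_zero_left h
  constructor
  · calc p ^ 3 = p * p ^ 2 := by noncomm_ring
    _ = p * (2 * (p * q) + p) := by rw [hp2]
    _ = 2 * (p ^ 2 * q) + p ^ 2 := by noncomm_ring
    _ = 2 * (-(p * q)) + (2 * (p * q) + p) := by rw [hpq, hp2]
    _ = p := by noncomm_ring
  · calc q ^ 3 = q * q ^ 2 := by noncomm_ring
    _ = q * (2 * (p * q) + q) := by rw [hq2]
    _ = 2 * (q * p * q) + q ^ 2 := by noncomm_ring
    _ = 2 * (p * q * q) + q ^ 2 := by rw [← hcomm]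
    _ = 2 * (p * q ^ 2) + q ^ 2 := by noncomm_ring
    _ = 2 * (p * (2 * (p * q) + q)) + (2 * (p * q) + q) := by rw [hq2]
    _ = 4 * (p ^ 2 * q) + (4 * (p * q) + q) := by noncomm_ring
    _ = 4 * (-(p * q)) + (4 * (p * q) + q) := by rw [hpq]
    _ = q := by noncomm_ring
end

section
/- Let n be a positive integer and suppose p, q ∈ Mat_n(ℂ) commute (pq = qp) and satisfy −p² + 2pq + p = 0 and −q² + 2pq + q = 0. Then p and q are simultaneously diagonalizable: there exists an invertible matrix S ∈ Mat_n(ℂ) such that both S p S⁻¹ and S q S⁻¹ are diagonal matrices. -/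
open Polynomial Module

/-- A complex matrix annihilated by a squarefree polynomial is diagonalizable. -/
lemma exists_conj_diagonal {n : ℕ} (m : Matrix (Fin n) (Fin n) ℂ)
    (r : ℂ[X]) (hr : Squarefree r) (h0 : Polynomial.aeval m r = 0) :
    ∃ S : Matrix (Fin n) (Fin n) ℂ, IsUnit S.det ∧ ∃ d : Fin n → ℂ,
      S * m * S⁻¹ = Matrix.diagonal d := by
  classical
  set fE : Module.End ℂ (Fin n → ℂ) := Matrix.toLinAlgEquiv' m with hfE
  have h0' : Polynomial.aeval fE r = 0 := by
    rw [hfE, ← AlgEquiv.coe_algHom, Polynomial.aeval_algHom_apply, h0, map_zero]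
  have hss : fE.IsSemisimple :=
    Module.End.isSemisimple_of_squarefree_aeval_eq_zero hr h0'
  have htop : ⨆ μ : ℂ, fE.eigenspace μ = ⊤ := by
    have h1 := Module.End.iSup_maxGenEigenspace_eq_top fE
    simpa [hss.isFinitelySemisimple.maxGenEigenspace_eq_eigenspace] using h1
  have hint : DirectSum.IsInternal (fun μ : ℂ => fE.eigenspace μ) :=
    DirectSum.isInternal_submodule_of_iSupIndep_of_iSup_eq_top
      fE.eigenspaces_iSupIndep htop
  let v : (μ : ℂ) → Basis (Module.Free.ChooseBasisIndex ℂ (fE.eigenspace μ)) ℂ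
      (fE.eigenspace μ) := fun μ => Module.Free.chooseBasis ℂ _
  let b0 := hint.collectedBasis v
  haveI : Fintype ((μ : ℂ) × Module.Free.ChooseBasisIndex ℂ (fE.eigenspace μ)) :=
    FiniteDimensional.fintypeBasisIndex b0
  have hcard : Fintype.card ((μ : ℂ) × Module.Free.ChooseBasisIndex ℂ (fE.eigenspace μ)) = n := by
    rw [← Module.finrank_eq_card_basis b0]
    simp
  let e := Fintype.equivFinOfCardEq hcard
  let b := b0.reindex e
  let d : Fin n → ℂ := fun j => (e.symm j).1
  have hb : ∀ j : Fin n, fE (b j) = d j • b j := by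
    intro j
    have hmem : b0 (e.symm j) ∈ fE.eigenspace ((e.symm j).1) :=
      hint.collectedBasis_mem v (e.symm j)
    have := (Module.End.mem_eigenspace_iff).mp hmem
    simpa [b, d, Module.Basis.reindex_apply] using this
  let S' : Matrix (Fin n) (Fin n) ℂ := (Pi.basisFun ℂ (Fin n)).toMatrix ⇑b
  haveI : Invertible S' := (Pi.basisFun ℂ (Fin n)).invertibleToMatrix b
  have hS' : IsUnit S'.det := Matrix.isUnit_det_of_invertible S'
  have hmS : m * S' = S' * Matrix.diagonal d := by
    ext i j
    have h1 : (fE (b j)) i = d j * (b j i) := by rw [hb j]; simp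
    have h2 : (fE (b j)) i = ∑ k, m i k * b j k := by
      simp [hfE, Matrix.toLinAlgEquiv'_apply, Matrix.mulVec, dotProduct]
    rw [Matrix.mul_apply, Matrix.mul_diagonal]
    have hS'e : ∀ i k, S' i k = b k i := by
      intro i k
      simp [S', Basis.toMatrix_apply]
    simp only [hS'e]
    rw [← h2, h1]
    ring
  refine ⟨S'⁻¹, S'.isUnit_nonsing_inv_det hS', d, ?_⟩
  rw [Matrix.nonsing_inv_nonsing_inv S' hS', mul_assoc, hmS, ← mul_assoc,
    Matrix.nonsing_inv_mul S' hS', one_mul]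

/-- The key algebraic identities forced by the residue equations. -/
lemma residue_identities {n : ℕ} (hn : 0 < n)
    (p q : Matrix (Fin n) (Fin n) ℂ) (hcomm : p * q = q * p)
    (hp : -p ^ 2 + 2 * (p * q) + p = 0)
    (hq : -q ^ 2 + 2 * (p * q) + q = 0) :
    (3 : Matrix (Fin n) (Fin n) ℂ) *
        ((p + 2*q) * ((p + 2*q) - 1) * ((p + 2*q) - 2) * ((p + 2*q) + 3)) = 0 ∧
    (90 : Matrix (Fin n) (Fin n) ℂ) * p =
        138 * (p + 2*q) - 27 * (p + 2*q)^2 - 21 * (p + 2*q)^3 := by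
  classical
  letI : CommRing (Algebra.adjoin ℂ ({p, q} : Set (Matrix (Fin n) (Fin n) ℂ))) :=
    Algebra.adjoinCommRingOfComm ℂ (fun a ha b hb => by
      simp only [Set.mem_insert_iff, Set.mem_singleton_iff] at ha hb
      rcases ha with rfl | rfl <;> rcases hb with rfl | rfl <;>
        first | rfl | exact hcomm | exact hcomm.symm)
  have hinjM : Function.Injective (algebraMap ℂ (Matrix (Fin n) (Fin n) ℂ)) := by
    intro a b hab
    have := congrArg (fun M => M ⟨0, hn⟩ ⟨0, hn⟩) hab
    simpa [Matrix.algebraMap_matrix_apply] using this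
  haveI : CharZero (Algebra.adjoin ℂ ({p, q} : Set (Matrix (Fin n) (Fin n) ℂ))) := by
    refine charZero_of_injective_algebraMap (R := ℂ) (fun a b hab => hinjM ?_)
    exact congrArg Subtype.val hab
  let P : Algebra.adjoin ℂ ({p, q} : Set (Matrix (Fin n) (Fin n) ℂ)) :=
    ⟨p, Algebra.subset_adjoin (by simp)⟩
  let Q : Algebra.adjoin ℂ ({p, q} : Set (Matrix (Fin n) (Fin n) ℂ)) :=
    ⟨q, Algebra.subset_adjoin (by simp)⟩
  have HP : -P ^ 2 + 2 * (P * Q) + P = 0 := Subtype.ext hp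
  have HQ : -Q ^ 2 + 2 * (P * Q) + Q = 0 := Subtype.ext hq
  have K1 : (3 : Algebra.adjoin ℂ ({p, q} : Set (Matrix (Fin n) (Fin n) ℂ))) *
      ((P + 2*Q) * ((P + 2*Q) - 1) * ((P + 2*Q) - 2) * ((P + 2*Q) + 3)) = 0 := by
    linear_combination (18 - 140*Q + 172*Q^2 - 3*P - 30*(P*Q) - 3*P^2) * HP +
      (36 - 48*Q - 48*Q^2 - 52*P + 152*(P*Q)) * HQ
  have K2 : (90 : Algebra.adjoin ℂ ({p, q} : Set (Matrix (Fin n) (Fin n) ℂ))) * P =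
      138 * (P + 2*Q) - 27 * (P + 2*Q)^2 - 21 * (P + 2*Q)^3 := by
    linear_combination (-48 + 448*Q - 21*P) * HP + (-276 - 168*Q + 308*P) * HQ
  exact ⟨congrArg Subtype.val K1, congrArg Subtype.val K2⟩

/-- Commuting solutions of the residue equations are simultaneously
diagonalizable. -/
theorem residue_commuting_simultaneously_diagonalizable (n : ℕ) (hn : 0 < n)
    (p q : Matrix (Fin n) (Fin n) ℂ) (hcomm : p * q = q * p)
    (hp : -p ^ 2 + 2 * (p * q) + p = 0)
    (hq : -q ^ 2 + 2 * (p * q) + q = 0) :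
    ∃ S : Matrix (Fin n) (Fin n) ℂ, IsUnit S.det ∧
      (S * p * S⁻¹).IsDiag ∧ (S * q * S⁻¹).IsDiag := by
  classical
  obtain ⟨K1, K2⟩ := residue_identities hn p q hcomm hp hq
  set m : Matrix (Fin n) (Fin n) ℂ := p + 2*q with hm
  have hm4 : m * (m - 1) * (m - 2) * (m + 3) = 0 := by
    have h3 : (3:ℂ) • (m * (m - 1) * (m - 2) * (m + 3)) = 0 := by
      rw [Algebra.smul_def, map_ofNat]
      exact K1
    rcases smul_eq_zero.mp h3 with h | h
    · exact absurd h (by norm_num)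
    · exact h
  set r : ℂ[X] := X * (X - C 1) * (X - C 2) * (X + C 3) with hr
  have hrprod : r = ∏ a ∈ ({0, 1, 2, -3} : Finset ℂ), (X - C a) := by
    rw [hr, Finset.prod_insert (by norm_num), Finset.prod_insert (by norm_num),
      Finset.prod_insert (by norm_num), Finset.prod_singleton]
    simp only [map_zero, map_neg]
    ring
  have hsq : Squarefree r := by
    rw [hrprod]
    exact (Polynomial.separable_prod_X_sub_C_iff'.mpr
      (fun a _ b _ h => h)).squarefree
  have h0 : Polynomial.aeval m r = 0 := by
    rw [hr]
    simp only [map_mul, map_sub, map_add, aeval_X, aeval_C, map_one, map_ofNat]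
    exact hm4
  obtain ⟨S, hS, d, hD⟩ := exists_conj_diagonal m r hsq h0
  have hinv : S⁻¹ * S = 1 := Matrix.nonsing_inv_mul S hS
  have hmul : ∀ X Y : Matrix (Fin n) (Fin n) ℂ,
      (S * X * S⁻¹) * (S * Y * S⁻¹) = S * (X * Y) * S⁻¹ := by
    intro X Y
    calc (S * X * S⁻¹) * (S * Y * S⁻¹) = S * X * (S⁻¹ * S) * Y * S⁻¹ := by
          simp only [mul_assoc]
      _ = S * (X * Y) * S⁻¹ := by rw [hinv]; simp only [mul_one, mul_assoc]
  have hD2 : S * m^2 * S⁻¹ = (Matrix.diagonal d)^2 := by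
    rw [pow_two, pow_two, ← hmul, hD]
  have hD3 : S * m^3 * S⁻¹ = (Matrix.diagonal d)^3 := by
    rw [pow_succ m 2, ← hmul, hD2, hD, ← pow_succ]
  have hp90 : (90:ℂ) • p = (138:ℂ) • m - (27:ℂ) • m^2 - (21:ℂ) • m^3 := by
    rw [Algebra.smul_def, Algebra.smul_def, Algebra.smul_def, Algebra.smul_def,
      map_ofNat, map_ofNat, map_ofNat, map_ofNat]
    exact K2
  have hP : S * p * S⁻¹ = (90:ℂ)⁻¹ • ((138:ℂ) • Matrix.diagonal d
      - (27:ℂ) • (Matrix.diagonal d)^2 - (21:ℂ) • (Matrix.diagonal d)^3) := by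
    have h1 : (90:ℂ) • (S * p * S⁻¹) = (138:ℂ) • (Matrix.diagonal d)
        - (27:ℂ) • (Matrix.diagonal d)^2 - (21:ℂ) • (Matrix.diagonal d)^3 := by
      have h0' : (90:ℂ) • (S * p * S⁻¹) = S * ((90:ℂ) • p) * S⁻¹ := by
        simp only [Matrix.smul_mul, Matrix.mul_smul]
      rw [h0', hp90]
      simp only [Matrix.mul_sub, Matrix.sub_mul, Matrix.mul_smul, Matrix.smul_mul]
      rw [hD, hD2, hD3]
    rw [← h1, inv_smul_smul₀ (by norm_num)]
  have hPdiag : (S * p * S⁻¹).IsDiag := by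
    rw [hP]
    refine Matrix.IsDiag.smul _ (Matrix.IsDiag.sub (Matrix.IsDiag.sub ?_ ?_) ?_) <;>
      refine Matrix.IsDiag.smul _ ?_
    · exact Matrix.isDiag_diagonal d
    · rw [Matrix.diagonal_pow]; exact Matrix.isDiag_diagonal _
    · rw [Matrix.diagonal_pow]; exact Matrix.isDiag_diagonal _
  have hq2 : q = (2:ℂ)⁻¹ • (m - p) := by
    have h2 : (2:ℂ) • q = m - p := by
      rw [Algebra.smul_def, map_ofNat, hm]
      noncomm_ring
    rw [← h2, inv_smul_smul₀ (by norm_num)]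
  have hQdiag : (S * q * S⁻¹).IsDiag := by
    have hqc : S * q * S⁻¹ = (2:ℂ)⁻¹ • (Matrix.diagonal d - S * p * S⁻¹) := by
      rw [hq2]
      simp only [Matrix.smul_mul, Matrix.mul_smul, Matrix.sub_mul, Matrix.mul_sub]
      rw [hD]
    rw [hqc]
    exact Matrix.IsDiag.smul _ ((Matrix.isDiag_diagonal d).sub hPdiag)
  exact ⟨S, hS, hPdiag, hQdiag⟩
end

section
/- Let n be a positive integer and suppose p, q ∈ Mat_n(ℂ) commute (pq = qp) and satisfy −p² + 2pq + p = 0 and −q² + 2pq + q = 0. Then there exists an invertible matrix S ∈ Mat_n(ℂ) such that P = S p S⁻¹ and Q = S q S⁻¹ are both diagonal and, for every index i, the pair of diagonal entries (P_{ii}, Q_{ii}) belongs to the four-element set {(−1,−1), (1,0), (0,1), (0,0)}. -/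
/-!
Put `r = p q`. Since `p` and `q` commute, `q` times the first relation plus `2 p` times the second
reads `3 (p² q + p q) = 0`, so `p r = q r = -r`. Then `r`, `p + r`, `q + r` and `1 - p - q - 3 r` sum
to `1`, and `(p, q)` acts on each of them by one of the scalar pairs `(-1, -1)`, `(1, 0)`, `(0, 1)`,
`(0, 0)`. Applying them to vectors shows that `ℂⁿ` is spanned by joint eigenvectors of `p` and `q`
with eigenvalue pairs in that set, and a basis chosen among these conjugates `p` and `q` to the
required diagonal form.
-/

open Matrix Module

section CommRing

variable {R : Type*} [CommRing R] {p q : R}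

theorem sq_mul_eq_neg_mul_of_residue (h3 : IsUnit (3 : R))
    (hp : -p ^ 2 + 2 * (p * q) + p = 0) (hq : -q ^ 2 + 2 * (p * q) + q = 0) :
    p ^ 2 * q = -(p * q) :=
  h3.mul_left_cancel (by linear_combination q * hp + 2 * p * hq)

theorem exists_residue_decomposition {K : Type*} [CommRing K] [Algebra K R] (h3 : IsUnit (3 : K))
    (hp : -p ^ 2 + 2 * (p * q) + p = 0) (hq : -q ^ 2 + 2 * (p * q) + q = 0) :
    ∃ e : Fin 4 → R, ∑ i, e i = 1 ∧
      ∀ i, ∃ c ∈ ({(-1, -1), (1, 0), (0, 1), (0, 0)} : Set (K × K)),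
        p * e i = c.1 • e i ∧ q * e i = c.2 • e i := by
  have h3R : IsUnit (3 : R) := map_ofNat (algebraMap K R) 3 ▸ h3.map (algebraMap K R)
  have hpq := sq_mul_eq_neg_mul_of_residue h3R hp hq
  have hqp := sq_mul_eq_neg_mul_of_residue h3R (p := q) (q := p)
    (by linear_combination hq) (by linear_combination hp)
  refine ⟨![p * q, p + p * q, q + p * q, 1 - p - q - 3 * (p * q)], ?_, fun i => ?_⟩
  · simp only [Fin.sum_univ_four, cons_val_zero, cons_val_one, cons_val]
    ring
  · fin_cases i <;>
      simp only [Fin.zero_eta, Fin.mk_one, Fin.reduceFinMk, cons_val_zero, cons_val_one, cons_val]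
    · refine ⟨(-1, -1), by simp, ?_, ?_⟩ <;> simp only [neg_smul, one_smul]
      exacts [by linear_combination hpq, by linear_combination hqp]
    · refine ⟨(1, 0), by simp, ?_, ?_⟩ <;> simp only [one_smul, zero_smul]
      exacts [by linear_combination -hp + hpq, by linear_combination hqp]
    · refine ⟨(0, 1), by simp, ?_, ?_⟩ <;> simp only [one_smul, zero_smul]
      exacts [by linear_combination hpq, by linear_combination -hq + hqp]
    · refine ⟨(0, 0), by simp, ?_, ?_⟩ <;> simp only [zero_smul]
      exacts [by linear_combination hp - 3 * hpq, by linear_combination hq - 3 * hqp]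

end CommRing

open scoped IsMulCommutative in
theorem Commute.exists_residue_decomposition {K A : Type*} [CommRing K] [Ring A] [Algebra K A]
    {p q : A} (hpq : Commute p q) (h3 : IsUnit (3 : K))
    (hp : -p ^ 2 + 2 * (p * q) + p = 0) (hq : -q ^ 2 + 2 * (p * q) + q = 0) :
    ∃ e : Fin 4 → A, ∑ i, e i = 1 ∧
      ∀ i, ∃ c ∈ ({(-1, -1), (1, 0), (0, 1), (0, 0)} : Set (K × K)),
        p * e i = c.1 • e i ∧ q * e i = c.2 • e i := by
  let B := Algebra.adjoin K {p, q}
  have : IsMulCommutative B := Algebra.isMulCommutative_adjoin K <| by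
    simp only [Set.mem_insert_iff, Set.mem_singleton_iff]
    rintro a (rfl | rfl) b (rfl | rfl) <;> simp [hpq.eq]
  let P : B := ⟨p, Algebra.subset_adjoin (by simp)⟩
  let Q : B := ⟨q, Algebra.subset_adjoin (by simp)⟩
  obtain ⟨e, hsum, he⟩ := _root_.exists_residue_decomposition (p := P) (q := Q) h3
    (Subtype.ext <| by push_cast; exact hp) (Subtype.ext <| by push_cast; exact hq)
  refine ⟨fun i => e i, by simpa using congrArg Subtype.val hsum, fun i => ?_⟩
  obtain ⟨c, hc, hPe, hQe⟩ := he i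
  exact ⟨c, hc, congrArg Subtype.val hPe, congrArg Subtype.val hQe⟩

theorem Module.Basis.exists_forall_mem_of_span_eq_top {K V ι : Type*} [DivisionRing K]
    [AddCommGroup V] [Module K V] (b₀ : Basis ι K V) {s : Set V}
    (hs : Submodule.span K s = ⊤) : ∃ b : Basis ι K V, ∀ i, b i ∈ s := by
  let b := Basis.ofSpan hs.ge
  refine ⟨b.reindex (b.indexEquiv b₀), fun i => ?_⟩
  rw [Basis.reindex_apply]
  exact Basis.ofSpan_subset hs.ge (Set.mem_range_self _)

section Matrix

variable {K n : Type*} [CommRing K] [Fintype n] [DecidableEq n]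

theorem Matrix.span_eq_top_of_sum_eq_one {ι : Type*} [Fintype ι] {e : ι → Matrix n n K}
    (he : ∑ i, e i = 1) {s : Set (n → K)} (hs : ∀ i v, e i *ᵥ v ∈ s) :
    Submodule.span K s = ⊤ := by
  refine Submodule.eq_top_iff'.mpr fun v => ?_
  rw [← one_mulVec v, ← he, sum_mulVec]
  exact Submodule.sum_mem _ fun i _ => Submodule.subset_span (hs i v)

theorem Module.Basis.isUnit_det_basisFun_toMatrix (b : Basis n K (n → K)) :
    IsUnit ((Pi.basisFun K n).toMatrix b).det :=
  have := (Pi.basisFun K n).invertibleToMatrix b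
  isUnit_det_of_invertible _

theorem Module.Basis.basisFun_toMatrix_inv_mul_mul_toMatrix (b : Basis n K (n → K))
    {m : Matrix n n K} {d : n → K} (h : ∀ j, m *ᵥ b j = d j • b j) :
    ((Pi.basisFun K n).toMatrix b)⁻¹ * m * (Pi.basisFun K n).toMatrix b = diagonal d := by
  set M := (Pi.basisFun K n).toMatrix b
  have hmM : m * M = M * diagonal d := by
    ext i j
    rw [mul_diagonal]
    simpa [M, mul_apply, Basis.toMatrix_apply, mulVec, dotProduct, mul_comm] using
      congrFun (h j) i
  rw [Matrix.mul_assoc, hmM, ← Matrix.mul_assoc,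
    nonsing_inv_mul _ b.isUnit_det_basisFun_toMatrix, Matrix.one_mul]

end Matrix

theorem residue_commuting_normal_form_general (n : ℕ)
    (p q : Matrix (Fin n) (Fin n) ℂ) (hcomm : p * q = q * p)
    (hp : -p ^ 2 + 2 * (p * q) + p = 0)
    (hq : -q ^ 2 + 2 * (p * q) + q = 0) :
    ∃ S : Matrix (Fin n) (Fin n) ℂ, IsUnit S.det ∧
      (S * p * S⁻¹).IsDiag ∧ (S * q * S⁻¹).IsDiag ∧
      ∀ i : Fin n, ((S * p * S⁻¹) i i, (S * q * S⁻¹) i i) ∈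
        ({(-1, -1), (1, 0), (0, 1), (0, 0)} : Set (ℂ × ℂ)) := by
  obtain ⟨e, hsum, he⟩ := Commute.exists_residue_decomposition (K := ℂ) hcomm (by norm_num) hp hq
  have hspan : Submodule.span ℂ {v | ∃ c ∈ ({(-1, -1), (1, 0), (0, 1), (0, 0)} : Set (ℂ × ℂ)),
      p *ᵥ v = c.1 • v ∧ q *ᵥ v = c.2 • v} = ⊤ := by
    refine span_eq_top_of_sum_eq_one hsum fun i v => ?_
    obtain ⟨c, hc, hpe, hqe⟩ := he i
    exact ⟨c, hc, by rw [mulVec_mulVec, hpe, smul_mulVec],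
      by rw [mulVec_mulVec, hqe, smul_mulVec]⟩
  obtain ⟨b, hb⟩ := (Pi.basisFun ℂ (Fin n)).exists_forall_mem_of_span_eq_top hspan
  choose c hc hpb hqb using hb
  have hM := b.isUnit_det_basisFun_toMatrix
  refine ⟨((Pi.basisFun ℂ (Fin n)).toMatrix b)⁻¹, isUnit_nonsing_inv_det _ hM, ?_⟩
  rw [nonsing_inv_nonsing_inv _ hM, b.basisFun_toMatrix_inv_mul_mul_toMatrix hpb,
    b.basisFun_toMatrix_inv_mul_mul_toMatrix hqb]
  exact ⟨isDiag_diagonal _, isDiag_diagonal _, fun i => by simpa using hc i⟩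

/-- Commuting solutions of the residue equations can be simultaneously
diagonalized so that every pair of diagonal entries lies in
`{(−1,−1), (1,0), (0,1), (0,0)}`. -/
theorem residue_commuting_normal_form (n : ℕ) (hn : 0 < n)
    (p q : Matrix (Fin n) (Fin n) ℂ) (hcomm : p * q = q * p)
    (hp : -p ^ 2 + 2 * (p * q) + p = 0)
    (hq : -q ^ 2 + 2 * (p * q) + q = 0) :
    ∃ S : Matrix (Fin n) (Fin n) ℂ, IsUnit S.det ∧
      (S * p * S⁻¹).IsDiag ∧ (S * q * S⁻¹).IsDiag ∧
      ∀ i : Fin n, ((S * p * S⁻¹) i i, (S * q * S⁻¹) i i) ∈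
        ({(-1, -1), (1, 0), (0, 1), (0, 0)} : Set (ℂ × ℂ)) :=
  residue_commuting_normal_form_general n p q hcomm hp hq
end

section
/- Let n be a positive integer and α, β ∈ ℂ. If there exist matrices p, q ∈ Mat_n(ℂ) satisfying the residue equations with pq ≠ qp, then the pair (α, β) belongs to the twelve-element set Σ₀ = {(1,−2), (0,0), (0,−1), (0,−2), (0,−3), (−1,0), (−1,−2), (−2,1), (−2,0), (−2,−1), (−2,−2), (−3,0)}. -/
/-!
Write `c = pq - qp ≠ 0`. Commuting each residue equation with `p` and with `q` gives four linear
relations between `pc`, `cp`, `qc`, `cq` and `c`. When neither `α` nor `β` lies in `{0, -2}`, they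
force `c` to be a common right eigenvector of `p, q` (the degenerate determinant only occurs at
`α = β = -1`, where they give `c = 0` outright), and then also a common left eigenvector, the
left eigenvalues being the right ones scaled by `(2 + α) / α` and `(2 + β) / β`. Multiplying the
residue equations by `c` confines both eigenvalue pairs to `{(0,0), (0,1), (1,0), (-1,-1)}`, and the
scaling is compatible with this only for the pair `(0, 0)`, at which the relations give `c = 0`.
For `α = 0` the same relations either force `(β + 2)(β + 3) = 0` or make `c` a left eigenvector of
`q`, whose eigenvalue equation leaves `β ∈ {0, -1, -2, -3}`. The remaining cases follow by symmetry:
exchanging `p` and `q` exchanges `α` and `β`, passing to the opposite ring replaces `(α, β)` by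
`(-2 - α, -2 - β)`, and `Σ₀` is invariant under both.
-/

open MulOpposite

/-- The pair of residue equations for `(α, β)` is `ResidueEq α p q ∧ ResidueEq β q p`. -/
def ResidueEq {K A : Type*} [Field K] [Ring A] [Algebra K A] (α : K) (p q : A) : Prop :=
  -p ^ 2 + 2 * (p * q) + α • (p * q - q * p) + p = 0

def sigmaZero (K : Type*) [Ring K] : Set (K × K) :=
  {(1, -2), (0, 0), (0, -1), (0, -2), (0, -3), (-1, 0), (-1, -2),
    (-2, 1), (-2, 0), (-2, -1), (-2, -2), (-3, 0)}

section sigmaZero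

variable {K : Type*} [Ring K] {a b : K}

theorem sigmaZero_swap (h : (a, b) ∈ sigmaZero K) : (b, a) ∈ sigmaZero K := by
  simp only [sigmaZero, Set.mem_insert_iff, Set.mem_singleton_iff, Prod.mk.injEq] at h ⊢
  rcases h with ⟨rfl, rfl⟩ | ⟨rfl, rfl⟩ | ⟨rfl, rfl⟩ | ⟨rfl, rfl⟩ | ⟨rfl, rfl⟩ | ⟨rfl, rfl⟩ |
    ⟨rfl, rfl⟩ | ⟨rfl, rfl⟩ | ⟨rfl, rfl⟩ | ⟨rfl, rfl⟩ | ⟨rfl, rfl⟩ | ⟨rfl, rfl⟩ <;> simp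

theorem sigmaZero_neg_two_sub (h : (a, b) ∈ sigmaZero K) : (-2 - a, -2 - b) ∈ sigmaZero K := by
  simp only [sigmaZero, Set.mem_insert_iff, Set.mem_singleton_iff, Prod.mk.injEq] at h ⊢
  rcases h with ⟨rfl, rfl⟩ | ⟨rfl, rfl⟩ | ⟨rfl, rfl⟩ | ⟨rfl, rfl⟩ | ⟨rfl, rfl⟩ | ⟨rfl, rfl⟩ |
    ⟨rfl, rfl⟩ | ⟨rfl, rfl⟩ | ⟨rfl, rfl⟩ | ⟨rfl, rfl⟩ | ⟨rfl, rfl⟩ | ⟨rfl, rfl⟩ <;> norm_num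

end sigmaZero

theorem eq_smul_of_smul_eq_smul {K A : Type*} [Field K] [AddCommGroup A] [Module K A] {k m : K}
    {x y : A} (hk : k ≠ 0) (h : k • x = m • y) : x = (k⁻¹ * m) • y := by
  rw [mul_smul, ← h, inv_smul_smul₀ hk]

section EigenPairs

variable {K : Type*} [Field K] [CharZero K]

theorem eigen_pair_cases {a b : K} (ha : a * (1 + 2 * b - a) = 0) (hb : b * (1 + 2 * a - b) = 0) :
    (a = 0 ∧ b = 0) ∨ (a = 0 ∧ b = 1) ∨ (a = 1 ∧ b = 0) ∨ (a = -1 ∧ b = -1) := by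
  rcases mul_eq_zero.1 ha with rfl | ha
  · rcases mul_eq_zero.1 hb with rfl | hb
    · exact .inl ⟨rfl, rfl⟩
    · exact .inr <| .inl ⟨rfl, by linear_combination -hb⟩
  · rcases mul_eq_zero.1 hb with rfl | hb
    · exact .inr <| .inr <| .inl ⟨by linear_combination -ha, rfl⟩
    · exact .inr <| .inr <| .inr ⟨by linear_combination (ha + 2 * hb) / 3,
        by linear_combination (hb + 2 * ha) / 3⟩

theorem eigen_pair_eq_zero_of_scaled {a b s t : K} (hs₀ : s ≠ 0) (hs₁ : s ≠ 1) (ht₀ : t ≠ 0)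
    (ht₁ : t ≠ 1) (ha : a * (1 + 2 * b - a) = 0) (hb : b * (1 + 2 * a - b) = 0)
    (hsa : s * a * (1 + 2 * (t * b) - s * a) = 0) (htb : t * b * (1 + 2 * (s * a) - t * b) = 0) :
    a = 0 ∧ b = 0 := by
  rcases eigen_pair_cases ha hb with h | ⟨rfl, rfl⟩ | ⟨rfl, rfl⟩ | ⟨rfl, rfl⟩
  · exact h
  · have ht : 1 - t = 0 := (mul_eq_zero.1 (by linear_combination htb)).resolve_left ht₀
    exact (ht₁ (by linear_combination -ht)).elim
  · have hs : 1 - s = 0 := (mul_eq_zero.1 (by linear_combination hsa)).resolve_left hs₀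
    exact (hs₁ (by linear_combination -hs)).elim
  · have hs : 1 - 2 * t + s = 0 := (mul_eq_zero.1 (by linear_combination -hsa)).resolve_left hs₀
    have ht : 1 - 2 * s + t = 0 := (mul_eq_zero.1 (by linear_combination -htb)).resolve_left ht₀
    exact (hs₁ (by linear_combination (-hs - 2 * ht) / 3)).elim

end EigenPairs

namespace ResidueEq

section Field

variable {K A : Type*} [Field K] [Ring A] [Algebra K A] {α β : K} {p q : A}

theorem op (h : ResidueEq α p q) : ResidueEq (-2 - α) (op p) (op q) := by
  have := congrArg MulOpposite.op h
  unfold ResidueEq at *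
  simp only [op_add, op_neg, op_pow, op_mul, op_smul, op_sub, op_zero, two_mul] at this ⊢
  rw [← this]
  module

theorem smul_mul_commutator (h : ResidueEq α p q) :
    (2 + α) • (p * (p * q - q * p)) = α • ((p * q - q * p) * p) := by
  have e : p * (-p ^ 2 + 2 * (p * q) + α • (p * q - q * p) + p)
      - (-p ^ 2 + 2 * (p * q) + α • (p * q - q * p) + p) * p = 0 := by
    rw [h, mul_zero, zero_mul, sub_zero]
  rw [← sub_eq_zero, ← e]
  simp only [pow_two, two_mul, mul_add, add_mul, mul_sub, sub_mul, mul_neg, neg_mul,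
    mul_smul_comm, smul_mul_assoc, mul_assoc]
  module

theorem mul_commutator_add (h : ResidueEq α p q) :
    p * (p * q - q * p) + (p * q - q * p) * p
      = (2 + α) • ((p * q - q * p) * q) - α • (q * (p * q - q * p)) + (p * q - q * p) := by
  have e : q * (-p ^ 2 + 2 * (p * q) + α • (p * q - q * p) + p)
      - (-p ^ 2 + 2 * (p * q) + α • (p * q - q * p) + p) * q = 0 := by
    rw [h, mul_zero, zero_mul, sub_zero]
  rw [← sub_eq_zero, ← e]
  simp only [pow_two, two_mul, mul_add, add_mul, mul_sub, sub_mul, mul_neg, neg_mul,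
    mul_smul_comm, smul_mul_assoc, mul_assoc]
  module

theorem smul_mul_commutator_swap (h : ResidueEq β q p) :
    (2 + β) • (q * (p * q - q * p)) = β • ((p * q - q * p) * q) := by
  simpa only [← neg_sub (p * q), mul_neg, neg_mul, smul_neg, neg_inj] using h.smul_mul_commutator

theorem mul_commutator_add_swap (h : ResidueEq β q p) :
    q * (p * q - q * p) + (p * q - q * p) * q
      = (2 + β) • ((p * q - q * p) * p) - β • (p * (p * q - q * p)) + (p * q - q * p) := by
  have e := h.mul_commutator_add
  simp only [← neg_sub (p * q), mul_neg, neg_mul, smul_neg] at e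
  linear_combination (norm := module) -e

theorem left_eigen {x : A} {a b : K} (h : ResidueEq α p q) (hx : x ≠ 0)
    (hxp : x * p = a • x) (hxq : x * q = b • x) : a * (1 + 2 * b - a) = 0 := by
  have e : x * (-p ^ 2 + 2 * (p * q) + α • (p * q - q * p) + p) = (a * (1 + 2 * b - a)) • x := by
    rw [two_mul]
    simp only [pow_two, mul_add, mul_sub, mul_neg, mul_smul_comm, ← mul_assoc, hxp, hxq,
      smul_mul_assoc, smul_smul]
    module
  rw [h, mul_zero] at e
  exact (smul_eq_zero.mp e.symm).resolve_right hx

theorem right_eigen {x : A} {a b : K} (h : ResidueEq α p q) (hx : x ≠ 0)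
    (hpx : p * x = a • x) (hqx : q * x = b • x) : a * (1 + 2 * b - a) = 0 := by
  have e : (-p ^ 2 + 2 * (p * q) + α • (p * q - q * p) + p) * x = (a * (1 + 2 * b - a)) • x := by
    rw [two_mul]
    simp only [pow_two, add_mul, sub_mul, neg_mul, smul_mul_assoc, mul_assoc, hpx, hqx,
      mul_smul_comm, smul_smul]
    module
  rw [h, zero_mul] at e
  exact (smul_eq_zero.mp e.symm).resolve_right hx

end Field

variable {K A : Type*} [Field K] [CharZero K] [Ring A] [Algebra K A] {α β : K} {p q : A}

theorem exists_commutator_eigen (hp : ResidueEq α p q) (hq : ResidueEq β q p) (hα : α ≠ 0)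
    (hβ : β ≠ 0) (hc : p * q - q * p ≠ 0) :
    ∃ a b : K, p * (p * q - q * p) = a • (p * q - q * p) ∧
      q * (p * q - q * p) = b • (p * q - q * p) := by
  have h₁ := hp.smul_mul_commutator
  have h₂ := hq.smul_mul_commutator_swap
  have h₃ := hp.mul_commutator_add
  have h₄ := hq.mul_commutator_add_swap
  set c := p * q - q * p
  -- eliminate `c * p` and `c * q` and solve the resulting linear system for `p * c` and `q * c`
  have hA : (2 * β * (1 + α)) • (p * c) - (2 * α * (2 + α + β)) • (q * c) = (α * β) • c := by
    linear_combination (norm := module) (α * β) • h₃ + β • h₁ - (α * (2 + α)) • h₂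
  have hB : (2 * α * (1 + β)) • (q * c) - (2 * β * (2 + α + β)) • (p * c) = (α * β) • c := by
    linear_combination (norm := module) (α * β) • h₄ + α • h₂ - (β * (2 + β)) • h₁
  set D := (1 + α) * (1 + β) - (2 + α + β) ^ 2
  have hpc : (4 * α * β * D) • (p * c) = (2 * α ^ 2 * β * (3 + α + 2 * β)) • c := by
    linear_combination (norm := module) (2 * α * (1 + β)) • hA + (2 * α * (2 + α + β)) • hB
  have hqc : (4 * α * β * D) • (q * c) = (2 * α * β ^ 2 * (3 + β + 2 * α)) • c := by
    linear_combination (norm := module) (2 * β * (1 + α)) • hB + (2 * β * (2 + α + β)) • hA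
  have hD : D ≠ 0 := by
    intro hD
    rw [hD, mul_zero, zero_smul, eq_comm, smul_eq_zero] at hpc hqc
    simp only [mul_eq_zero, pow_eq_zero_iff, two_ne_zero, hα, hβ, hc, false_or, or_false,
      ne_eq, not_false_eq_true] at hpc hqc
    obtain rfl : α = -1 := by linear_combination (2 * hqc - hpc) / 3
    obtain rfl : β = -1 := by linear_combination (2 * hpc - hqc) / 3
    exact hc (by linear_combination (norm := module) -hA)
  have h4D : 4 * α * β * D ≠ 0 := by simp [hα, hβ, hD]
  exact ⟨_, _, eq_smul_of_smul_eq_smul h4D hpc, eq_smul_of_smul_eq_smul h4D hqc⟩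

theorem eq_zero_or_eq_neg_two (hp : ResidueEq α p q) (hq : ResidueEq β q p) (hc : p * q ≠ q * p) :
    (α = 0 ∨ α = -2) ∨ (β = 0 ∨ β = -2) := by
  by_contra! h
  obtain ⟨⟨hα₀, hα₂⟩, hβ₀, hβ₂⟩ := h
  have h₁ := hp.smul_mul_commutator
  have h₂ := hq.smul_mul_commutator_swap
  have h₃ := hp.mul_commutator_add
  set c := p * q - q * p
  have hc : c ≠ 0 := sub_ne_zero.2 hc
  obtain ⟨a, b, hpc, hqc⟩ := exists_commutator_eigen hp hq hα₀ hβ₀ hc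
  rw [hpc, smul_smul, eq_comm] at h₁
  rw [hqc, smul_smul, eq_comm] at h₂
  have hcp := eq_smul_of_smul_eq_smul hα₀ h₁
  have hcq := eq_smul_of_smul_eq_smul hβ₀ h₂
  rw [← mul_assoc] at hcp hcq
  have hs₀ : α⁻¹ * (2 + α) ≠ 0 :=
    mul_ne_zero (inv_ne_zero hα₀) fun h ↦ hα₂ (by linear_combination h)
  have hs₁ : α⁻¹ * (2 + α) ≠ 1 := fun h ↦ (two_ne_zero : (2 : K) ≠ 0) (by
    field_simp at h; linear_combination h)
  have ht₀ : β⁻¹ * (2 + β) ≠ 0 :=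
    mul_ne_zero (inv_ne_zero hβ₀) fun h ↦ hβ₂ (by linear_combination h)
  have ht₁ : β⁻¹ * (2 + β) ≠ 1 := fun h ↦ (two_ne_zero : (2 : K) ≠ 0) (by
    field_simp at h; linear_combination h)
  obtain ⟨rfl, rfl⟩ := eigen_pair_eq_zero_of_scaled hs₀ hs₁ ht₀ ht₁ (hp.right_eigen hc hpc hqc)
    (hq.right_eigen hc hqc hpc) (hp.left_eigen hc hcp hcq) (hq.left_eigen hc hcq hcp)
  -- all four eigenvalues vanish, so `h₃` collapses to `c = 0`
  apply hc
  linear_combination (norm := module) -h₃ + hpc + hcp - (2 + α) • hcq + α • hqc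

theorem eq_of_left_zero (hp : ResidueEq (0 : K) p q) (hq : ResidueEq β q p) (hc : p * q ≠ q * p) :
    β = 0 ∨ β = -1 ∨ β = -2 ∨ β = -3 := by
  have h₁ := hp.smul_mul_commutator
  have h₂ := hq.smul_mul_commutator_swap
  have h₃ := hp.mul_commutator_add
  have h₄ := hq.mul_commutator_add_swap
  set c := p * q - q * p
  have hc : c ≠ 0 := sub_ne_zero.2 hc
  have hpc : p * c = 0 := by simpa using h₁
  have hcp : c * p = (2 : K) • (c * q) + c := by linear_combination (norm := module) h₃ - hpc
  have hcq : (2 * (β ^ 2 + 3 * β + 3)) • (c * q) = (-((β + 2) * (β + 3))) • c := by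
    linear_combination (norm := module)
      h₂ - (2 + β) • h₄ - ((2 + β) ^ 2) • hcp + (β * (2 + β)) • hpc
  suffices hprod : (β + 2) * (β + 3) = 0 ∨ β * (β + 1) = 0 by
    rcases hprod with h | h <;> rcases mul_eq_zero.1 h with h | h
    exacts [.inr <| .inr <| .inl <| eq_neg_of_add_eq_zero_left h,
      .inr <| .inr <| .inr <| eq_neg_of_add_eq_zero_left h, .inl h,
      .inr <| .inl <| eq_neg_of_add_eq_zero_left h]
  by_cases hk : 2 * (β ^ 2 + 3 * β + 3) = 0
  · rw [hk, zero_smul, eq_comm, smul_eq_zero, neg_eq_zero] at hcq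
    exact .inl (hcq.resolve_right hc)
  obtain ⟨ρ, hρ, hcq⟩ : ∃ ρ : K, 2 * (β ^ 2 + 3 * β + 3) * ρ = -((β + 2) * (β + 3)) ∧
      c * q = ρ • c :=
    ⟨_, mul_inv_cancel_left₀ hk _, eq_smul_of_smul_eq_smul hk hcq⟩
  replace hcp : c * p = (2 * ρ + 1) • c := by
    rw [hcp, hcq, smul_smul, add_smul, one_smul]
  have hquad := hq.left_eigen hc hcq hcp
  rcases mul_eq_zero.1 (by linear_combination hquad / 3 : ρ * (ρ + 1) = 0) with h | h
  · exact .inl (by linear_combination hρ - 2 * (β ^ 2 + 3 * β + 3) * h)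
  · exact .inr (by linear_combination -hρ + 2 * (β ^ 2 + 3 * β + 3) * h)

theorem mem_sigmaZero_of_left_zero (hp : ResidueEq (0 : K) p q) (hq : ResidueEq β q p)
    (hc : p * q ≠ q * p) : ((0 : K), β) ∈ sigmaZero K := by
  rcases eq_of_left_zero hp hq hc with rfl | rfl | rfl | rfl <;> simp [sigmaZero]

theorem mem_sigmaZero (hp : ResidueEq α p q) (hq : ResidueEq β q p) (hc : p * q ≠ q * p) :
    (α, β) ∈ sigmaZero K := by
  have hc_op : MulOpposite.op p * MulOpposite.op q ≠ MulOpposite.op q * MulOpposite.op p := by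
    simpa [← op_mul, op_inj] using hc.symm
  rcases hp.eq_zero_or_eq_neg_two hq hc with (rfl | rfl) | (rfl | rfl)
  · exact mem_sigmaZero_of_left_zero hp hq hc
  · simpa using sigmaZero_neg_two_sub
      (mem_sigmaZero_of_left_zero (by simpa using hp.op) hq.op hc_op)
  · exact sigmaZero_swap (mem_sigmaZero_of_left_zero hq hp hc.symm)
  · simpa using sigmaZero_swap <| sigmaZero_neg_two_sub
      (mem_sigmaZero_of_left_zero (by simpa using hq.op) hp.op hc_op.symm)

end ResidueEq

theorem noncommuting_residues_imply_Sigma0_general (n : ℕ) (α β : ℂ)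
    (p q : Matrix (Fin n) (Fin n) ℂ)
    (hp : -p ^ 2 + 2 * (p * q) + α • (p * q - q * p) + p = 0)
    (hq : -q ^ 2 + 2 * (q * p) + β • (q * p - p * q) + q = 0)
    (hnc : p * q ≠ q * p) :
    (α, β) ∈ ({(1, -2), (0, 0), (0, -1), (0, -2), (0, -3), (-1, 0), (-1, -2),
      (-2, 1), (-2, 0), (-2, -1), (-2, -2), (-3, 0)} : Set (ℂ × ℂ)) :=
  ResidueEq.mem_sigmaZero hp hq hnc

/-- If the residue equations admit a solution with non-commuting `p, q`,
then `(α, β)` belongs to the twelve-element set `Σ₀`. -/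
theorem noncommuting_residues_imply_Sigma0 (n : ℕ) (hn : 0 < n) (α β : ℂ)
    (p q : Matrix (Fin n) (Fin n) ℂ)
    (hp : -p ^ 2 + 2 * (p * q) + α • (p * q - q * p) + p = 0)
    (hq : -q ^ 2 + 2 * (q * p) + β • (q * p - p * q) + q = 0)
    (hnc : p * q ≠ q * p) :
    (α, β) ∈ ({(1, -2), (0, 0), (0, -1), (0, -2), (0, -3), (-1, 0), (-1, -2),
      (-2, 1), (-2, 0), (-2, -1), (-2, -2), (-3, 0)} : Set (ℂ × ℂ)) :=
  noncommuting_residues_imply_Sigma0_general n α β p q hp hq hnc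
end

section
/- Let n = k₁ + k₂ + k₃ + k₄ with k₁, k₂, k₃, k₄ ≥ 0, let α, β ∈ ℂ, and let p = diag(−I_{k₁}, I_{k₂}, 0_{k₃}, 0_{k₄}), q = diag(−I_{k₁}, 0_{k₂}, I_{k₃}, 0_{k₄}) in Mat_n(ℂ). Define the linear operator 𝓛 on Mat_n(ℂ) ⊕ Mat_n(ℂ) by 𝓛(X, Y) = (−pX − Xp + 2(pY + Xq) + α([p,Y] + [X,q]), −qY − Yq + 2(qX + Yp) + β([q,X] + [Y,p])). Then every eigenvalue of 𝓛 belongs to the set {−2, 2, −1, 0, −α, −β, α+2, β+2, 4+α+2β, 4+2α+β, 3+α+β, −2−α−2β, −2−2α−β, 1+α−β, 1−α+β, −1−α−β}. -/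
set_option maxHeartbeats 1000000

private lemma quadRoots (lam r1 r2 : ℂ) (h : (lam - r1) * (lam - r2) = 0) :
    lam = r1 ∨ lam = r2 := by
  rcases mul_eq_zero.1 h with h | h
  · exact Or.inl (sub_eq_zero.1 h)
  · exact Or.inr (sub_eq_zero.1 h)

/-- For `p = diag(−I_{k₁}, I_{k₂}, 0_{k₃}, 0_{k₄})`,
`q = diag(−I_{k₁}, 0_{k₂}, I_{k₃}, 0_{k₄})`, every eigenvalue of the operator `𝓛` on
`Mat_n(ℂ) ⊕ Mat_n(ℂ)` belongs to the stated 16-element set. -/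
theorem spectrum_of_L (k₁ k₂ k₃ k₄ : ℕ) (α β lam : ℂ)
    (p q : Matrix (Fin (k₁ + k₂ + k₃ + k₄)) (Fin (k₁ + k₂ + k₃ + k₄)) ℂ)
    (hp : p = Matrix.diagonal (fun i : Fin (k₁ + k₂ + k₃ + k₄) =>
      if (i : ℕ) < k₁ then -1 else if (i : ℕ) < k₁ + k₂ then 1 else 0))
    (hq : q = Matrix.diagonal (fun i : Fin (k₁ + k₂ + k₃ + k₄) =>
      if (i : ℕ) < k₁ then -1 else if (i : ℕ) < k₁ + k₂ then 0
      else if (i : ℕ) < k₁ + k₂ + k₃ then 1 else 0))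
    (X Y : Matrix (Fin (k₁ + k₂ + k₃ + k₄)) (Fin (k₁ + k₂ + k₃ + k₄)) ℂ)
    (hXY : ¬(X = 0 ∧ Y = 0))
    (hX : -(p * X) - X * p + 2 * (p * Y + X * q)
        + α • ((p * Y - Y * p) + (X * q - q * X)) = lam • X)
    (hY : -(q * Y) - Y * q + 2 * (q * X + Y * p)
        + β • ((q * X - X * q) + (Y * p - p * Y)) = lam • Y) :
    lam ∈ ({-2, 2, -1, 0, -α, -β, α + 2, β + 2, 4 + α + 2 * β, 4 + 2 * α + β,
      3 + α + β, -2 - α - 2 * β, -2 - 2 * α - β, 1 + α - β, 1 - α + β,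
      -1 - α - β} : Set ℂ) := by
  simp only [Set.mem_insert_iff, Set.mem_singleton_iff]
  have hpl : ∀ (M : Matrix (Fin (k₁ + k₂ + k₃ + k₄)) (Fin (k₁ + k₂ + k₃ + k₄)) ℂ)
      (i j : Fin (k₁ + k₂ + k₃ + k₄)), (p * M) i j = p i i * M i j := by
    intro M i j; rw [hp]; simp [Matrix.diagonal_mul]
  have hpr : ∀ (M : Matrix (Fin (k₁ + k₂ + k₃ + k₄)) (Fin (k₁ + k₂ + k₃ + k₄)) ℂ)
      (i j : Fin (k₁ + k₂ + k₃ + k₄)), (M * p) i j = M i j * p j j := by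
    intro M i j; rw [hp]; simp [Matrix.mul_diagonal]
  have hql : ∀ (M : Matrix (Fin (k₁ + k₂ + k₃ + k₄)) (Fin (k₁ + k₂ + k₃ + k₄)) ℂ)
      (i j : Fin (k₁ + k₂ + k₃ + k₄)), (q * M) i j = q i i * M i j := by
    intro M i j; rw [hq]; simp [Matrix.diagonal_mul]
  have hqr : ∀ (M : Matrix (Fin (k₁ + k₂ + k₃ + k₄)) (Fin (k₁ + k₂ + k₃ + k₄)) ℂ)
      (i j : Fin (k₁ + k₂ + k₃ + k₄)), (M * q) i j = M i j * q j j := by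
    intro M i j; rw [hq]; simp [Matrix.mul_diagonal]
  obtain ⟨i, j, hij⟩ : ∃ i j, X i j ≠ 0 ∨ Y i j ≠ 0 := by
    by_contra h
    push_neg at h
    exact hXY ⟨Matrix.ext fun i j => (h i j).1, Matrix.ext fun i j => (h i j).2⟩
  rw [two_mul] at hX hY
  have ex := congrFun (congrFun hX i) j
  have ey := congrFun (congrFun hY i) j
  simp only [Matrix.add_apply, Matrix.sub_apply, Matrix.neg_apply, Matrix.smul_apply,
    smul_eq_mul, hpl, hpr, hql, hqr] at ex ey
  have hi : (p i i = -1 ∧ q i i = -1) ∨ (p i i = 1 ∧ q i i = 0) ∨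
      (p i i = 0 ∧ q i i = 1) ∨ (p i i = 0 ∧ q i i = 0) := by
    rw [hp, hq]; simp only [Matrix.diagonal_apply_eq]
    by_cases h1 : (i : ℕ) < k₁ <;> by_cases h2 : (i : ℕ) < k₁ + k₂ <;>
      by_cases h3 : (i : ℕ) < k₁ + k₂ + k₃ <;> simp [h1, h2, h3]
  have hj : (p j j = -1 ∧ q j j = -1) ∨ (p j j = 1 ∧ q j j = 0) ∨
      (p j j = 0 ∧ q j j = 1) ∨ (p j j = 0 ∧ q j j = 0) := by
    rw [hp, hq]; simp only [Matrix.diagonal_apply_eq]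
    by_cases h1 : (j : ℕ) < k₁ <;> by_cases h2 : (j : ℕ) < k₁ + k₂ <;>
      by_cases h3 : (j : ℕ) < k₁ + k₂ + k₃ <;> simp [h1, h2, h3]
  have hdx : ((-(p i i) - p j j + 2 * q j j + α * (q j j - q i i) - lam) *
      (-(q i i) - q j j + 2 * p j j + β * (p j j - p i i) - lam) -
      (2 * p i i + α * (p i i - p j j)) * (2 * q i i + β * (q i i - q j j))) * X i j = 0 := by
    linear_combination (-(q i i) - q j j + 2 * p j j + β * (p j j - p i i) - lam) * ex
      - (2 * p i i + α * (p i i - p j j)) * ey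
  have hdy : ((-(p i i) - p j j + 2 * q j j + α * (q j j - q i i) - lam) *
      (-(q i i) - q j j + 2 * p j j + β * (p j j - p i i) - lam) -
      (2 * p i i + α * (p i i - p j j)) * (2 * q i i + β * (q i i - q j j))) * Y i j = 0 := by
    linear_combination (-(p i i) - p j j + 2 * q j j + α * (q j j - q i i) - lam) * ey
      - (2 * q i i + β * (q i i - q j j)) * ex
  have hdet : (-(p i i) - p j j + 2 * q j j + α * (q j j - q i i) - lam) *
      (-(q i i) - q j j + 2 * p j j + β * (p j j - p i i) - lam) -
      (2 * p i i + α * (p i i - p j j)) * (2 * q i i + β * (q i i - q j j)) = 0 := by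
    rcases hij with h | h
    · exact (mul_eq_zero.1 hdx).resolve_right h
    · exact (mul_eq_zero.1 hdy).resolve_right h
  clear hdx hdy ex ey hX hY hXY hpl hpr hql hqr hp hq
  rcases hi with ⟨ha, hb⟩ | ⟨ha, hb⟩ | ⟨ha, hb⟩ | ⟨ha, hb⟩ <;>
    rcases hj with ⟨hc, hd⟩ | ⟨hc, hd⟩ | ⟨hc, hd⟩ | ⟨hc, hd⟩ <;>
      rw [ha, hb, hc, hd] at hdet
  · rcases quadRoots lam (-2) 2 (by linear_combination hdet) with h | h <;> tauto
  · rcases quadRoots lam (-1) (4 + α + 2 * β) (by linear_combination hdet) with h | h <;> tauto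
  · rcases quadRoots lam (-1) (4 + 2 * α + β) (by linear_combination hdet) with h | h <;> tauto
  · rcases quadRoots lam (-1) (3 + α + β) (by linear_combination hdet) with h | h <;> tauto
  · rcases quadRoots lam (-1) (-2 - α - 2 * β) (by linear_combination hdet) with h | h <;> tauto
  · rcases quadRoots lam (-2) 2 (by linear_combination hdet) with h | h <;> tauto
  · rcases quadRoots lam (-1) (1 + α - β) (by linear_combination hdet) with h | h <;> tauto
  · rcases quadRoots lam (-1) (-β) (by linear_combination hdet) with h | h <;> tauto
  · rcases quadRoots lam (-1) (-2 - 2 * α - β) (by linear_combination hdet) with h | h <;> tauto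
  · rcases quadRoots lam (-1) (1 - α + β) (by linear_combination hdet) with h | h <;> tauto
  · rcases quadRoots lam (-2) 2 (by linear_combination hdet) with h | h <;> tauto
  · rcases quadRoots lam (-1) (-α) (by linear_combination hdet) with h | h <;> tauto
  · rcases quadRoots lam (-1) (-1 - α - β) (by linear_combination hdet) with h | h <;> tauto
  · rcases quadRoots lam (-1) (β + 2) (by linear_combination hdet) with h | h <;> tauto
  · rcases quadRoots lam (-1) (α + 2) (by linear_combination hdet) with h | h <;> tauto
  · rcases quadRoots lam 0 0 (by linear_combination hdet) with h | h <;> tauto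
end

section
/- Let n be a positive integer, α, β ∈ ℂ, and let u, v : ℂ → Mat_n(ℂ) be differentiable functions satisfying u'(z) = −u² + 2uv + α(uv − vu) and v'(z) = −v² + 2vu + β(vu − uv) for all z ∈ ℂ. Then the functions U = uᵀ, V = vᵀ (entrywise matrix transpose) satisfy U' = −U² + 2UV + α'(UV − VU) and V' = −V² + 2VU + β'(VU − UV) with α' = −α − 2 and β' = −β − 2; that is, the involution (u, v) ↦ (uᵀ, vᵀ) maps solutions with parameters (α, β) to solutions with parameters (−α−2, −β−2). -/
open scoped Matrix
attribute [local instance] Matrix.linftyOpNormedAddCommGroup Matrix.linftyOpNormedSpace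

theorem hasDerivAt_transpose_aux {n : ℕ} {f : ℂ → Matrix (Fin n) (Fin n) ℂ}
    {f' : Matrix (Fin n) (Fin n) ℂ} {z : ℂ} (hf : HasDerivAt f f' z) :
    HasDerivAt (fun z => (f z)ᵀ) f'ᵀ z :=
  (LinearMap.toContinuousLinearMap
    ((Matrix.transposeLinearEquiv (Fin n) (Fin n) ℂ ℂ).toLinearMap)).hasFDerivAt.comp_hasDerivAt
    z hf

/-- The involution `(u, v) ↦ (uᵀ, vᵀ)` maps solutions of the homogeneous system
with parameters `(α, β)` to solutions with parameters `(−α−2, −β−2)`. -/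
theorem involution_transpose (n : ℕ) (hn : 0 < n) (α β : ℂ)
    (u v : ℂ → Matrix (Fin n) (Fin n) ℂ)
    (hu : ∀ z : ℂ, HasDerivAt u
      (-(u z) ^ 2 + 2 * (u z * v z) + α • (u z * v z - v z * u z)) z)
    (hv : ∀ z : ℂ, HasDerivAt v
      (-(v z) ^ 2 + 2 * (v z * u z) + β • (v z * u z - u z * v z)) z) :
    (∀ z : ℂ, HasDerivAt (fun z => (u z)ᵀ)
      (-((u z)ᵀ) ^ 2 + 2 * ((u z)ᵀ * (v z)ᵀ)
        + (-α - 2) • ((u z)ᵀ * (v z)ᵀ - (v z)ᵀ * (u z)ᵀ)) z) ∧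
    (∀ z : ℂ, HasDerivAt (fun z => (v z)ᵀ)
      (-((v z)ᵀ) ^ 2 + 2 * ((v z)ᵀ * (u z)ᵀ)
        + (-β - 2) • ((v z)ᵀ * (u z)ᵀ - (u z)ᵀ * (v z)ᵀ)) z) := by
  constructor <;> intro z
  · have h := hasDerivAt_transpose_aux (hu z)
    convert h using 1
    simp only [Matrix.transpose_add, Matrix.transpose_neg, Matrix.transpose_pow,
      Matrix.transpose_mul, Matrix.transpose_smul, Matrix.transpose_sub, sub_smul, smul_sub,
      Matrix.transpose_ofNat, two_mul]
    module
  · have h := hasDerivAt_transpose_aux (hv z)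
    convert h using 1
    simp only [Matrix.transpose_add, Matrix.transpose_neg, Matrix.transpose_pow,
      Matrix.transpose_mul, Matrix.transpose_smul, Matrix.transpose_sub, sub_smul, smul_sub,
      Matrix.transpose_ofNat, two_mul]
    module
end

section
/- Let n be a positive integer, α, β ∈ ℂ, and let u, v : ℂ → Mat_n(ℂ) be differentiable functions satisfying u'(z) = −u² + 2uv + α(uv − vu) and v'(z) = −v² + 2vu + β(vu − uv) for all z ∈ ℂ. Then the functions U = −u, V = v − u satisfy U' = −U² + 2UV + α(UV − VU) and V' = −V² + 2VU + β'(VU − UV) with β' = −α − β − 3; that is, the involution (u, v) ↦ (−u, v − u) maps solutions with parameters (α, β) to solutions with parameters (α, −α−β−3). -/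
attribute [local instance] Matrix.linftyOpNormedAddCommGroup Matrix.linftyOpNormedSpace

section HomogeneousField

variable {R A : Type*} [CommRing R] [Ring A] [Algebra R A]

/-- The system reads `u' = homogeneousField α u v`, `v' = homogeneousField β v u`. -/
def homogeneousField (α : R) (u v : A) : A :=
  -u ^ 2 + 2 * (u * v) + α • (u * v - v * u)

theorem homogeneousField_neg_shear (α : R) (u v : A) :
    homogeneousField α (-u) (v - u) = -homogeneousField α u v := by
  simp only [homogeneousField, pow_two, neg_mul, mul_neg, sub_mul, mul_sub, neg_sub, neg_neg,
    two_mul, smul_sub]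
  module

theorem homogeneousField_shear_swap (α β : R) (u v : A) :
    homogeneousField (-α - β - 3) (v - u) (-u) =
      homogeneousField β v u - homogeneousField α u v := by
  simp only [homogeneousField, pow_two, neg_mul, mul_neg, sub_mul, mul_sub, neg_sub,
    two_mul, smul_sub]
  module

end HomogeneousField

theorem involution_shear_general (n : ℕ) (α β : ℂ)
    (u v : ℂ → Matrix (Fin n) (Fin n) ℂ)
    (hu : ∀ z : ℂ, HasDerivAt u
      (-(u z) ^ 2 + 2 * (u z * v z) + α • (u z * v z - v z * u z)) z)
    (hv : ∀ z : ℂ, HasDerivAt v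
      (-(v z) ^ 2 + 2 * (v z * u z) + β • (v z * u z - u z * v z)) z) :
    (∀ z : ℂ, HasDerivAt (fun z => -u z)
      (-(-u z) ^ 2 + 2 * (-u z * (v z - u z))
        + α • (-u z * (v z - u z) - (v z - u z) * -u z)) z) ∧
    (∀ z : ℂ, HasDerivAt (fun z => v z - u z)
      (-(v z - u z) ^ 2 + 2 * ((v z - u z) * -u z)
        + (-α - β - 3) • ((v z - u z) * -u z - -u z * (v z - u z))) z) :=
  ⟨fun z => (hu z).neg.congr_deriv (homogeneousField_neg_shear α (u z) (v z)).symm,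
    fun z => ((hv z).sub (hu z)).congr_deriv (homogeneousField_shear_swap α β (u z) (v z)).symm⟩

/-- The involution `(u, v) ↦ (−u, v − u)` maps solutions of the homogeneous
system with parameters `(α, β)` to solutions with parameters `(α, −α−β−3)`. -/
theorem involution_shear (n : ℕ) (hn : 0 < n) (α β : ℂ)
    (u v : ℂ → Matrix (Fin n) (Fin n) ℂ)
    (hu : ∀ z : ℂ, HasDerivAt u
      (-(u z) ^ 2 + 2 * (u z * v z) + α • (u z * v z - v z * u z)) z)
    (hv : ∀ z : ℂ, HasDerivAt v
      (-(v z) ^ 2 + 2 * (v z * u z) + β • (v z * u z - u z * v z)) z) :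
    (∀ z : ℂ, HasDerivAt (fun z => -u z)
      (-(-u z) ^ 2 + 2 * (-u z * (v z - u z))
        + α • (-u z * (v z - u z) - (v z - u z) * -u z)) z) ∧
    (∀ z : ℂ, HasDerivAt (fun z => v z - u z)
      (-(v z - u z) ^ 2 + 2 * ((v z - u z) * -u z)
        + (-α - β - 3) • ((v z - u z) * -u z - -u z * (v z - u z))) z) :=
  involution_shear_general n α β u v hu hv
end

section
/- Let c₁, c₂ ∈ ℂ and let u, v : ℂ → ℂ be differentiable functions with u(z) ≠ 0 for all z, satisfying u'(z) = −u² + 2uv − 2zu + c₁ and v'(z) = −v² + 2uv + 2zv + c₂ for all z ∈ ℂ. Then y = u is twice differentiable and satisfies the Painlevé-4 equation y'' = (y')²/(2y) + (3/2)y³ + 4z y² + 2(z² − γ)y + δ/y with γ = 1 + c₁/2 − c₂ and δ = −c₁²/2. -/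
/-- If `u, v : ℂ → ℂ` with `u` nowhere vanishing solve the scalar system
`u' = −u² + 2uv − 2zu + c₁`, `v' = −v² + 2uv + 2zv + c₂`, then `y = u` satisfies the
Painlevé-4 equation `y'' = y'²/(2y) + (3/2)y³ + 4zy² + 2(z² − γ)y + δ/y` with
`γ = 1 + c₁/2 − c₂` and `δ = −c₁²/2`. -/
theorem scalar_P4_equation (c₁ c₂ γ δ : ℂ)
    (hγ : γ = 1 + c₁ / 2 - c₂) (hδ : δ = -c₁ ^ 2 / 2)
    (u v : ℂ → ℂ) (hu0 : ∀ z : ℂ, u z ≠ 0)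
    (hu : ∀ z : ℂ, HasDerivAt u (-(u z) ^ 2 + 2 * u z * v z - 2 * z * u z + c₁) z)
    (hv : ∀ z : ℂ, HasDerivAt v (-(v z) ^ 2 + 2 * u z * v z + 2 * z * v z + c₂) z) :
    ∀ z : ℂ, HasDerivAt (deriv u)
      ((deriv u z) ^ 2 / (2 * u z) + (3 / 2) * (u z) ^ 3 + 4 * z * (u z) ^ 2
        + 2 * (z ^ 2 - γ) * u z + δ / u z) z := by
  have hfun : deriv u = fun w => -(u w) ^ 2 + 2 * u w * v w - 2 * w * u w + c₁ :=
    funext fun w => (hu w).deriv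
  intro z
  have h1 := hu z
  have h2 := hv z
  have H : HasDerivAt (fun w => -(u w) ^ 2 + 2 * u w * v w - 2 * w * u w + c₁)
      (-(2 * u z ^ 1 * (-(u z) ^ 2 + 2 * u z * v z - 2 * z * u z + c₁))
        + (2 * (-(u z) ^ 2 + 2 * u z * v z - 2 * z * u z + c₁) * v z
           + 2 * u z * (-(v z) ^ 2 + 2 * u z * v z + 2 * z * v z + c₂))
        - (2 * 1 * u z + 2 * z * (-(u z) ^ 2 + 2 * u z * v z - 2 * z * u z + c₁))) z := by
    exact (((h1.pow 2).neg.add ((h1.const_mul 2).mul h2)).sub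
      (((hasDerivAt_id z).const_mul 2).mul h1)).add_const c₁
  simp only [hfun]
  convert H using 1
  have h0 := hu0 z
  subst hγ hδ
  field_simp
  ring
end

section
/- Let n be a positive integer, β ∈ ℂ, c₁, c₂, c₃, c₄ ∈ Mat_n(ℂ), and let f, g : ℂ → Mat_n(ℂ) be differentiable functions satisfying f'(x) = −f² + g − (x/2)·I − c₁ and g'(x) = 2gf + β(gf − fg) + c₂ f + f c₃ + c₄ for all x ∈ ℂ. Then y = f is twice differentiable and satisfies the matrix Painlevé-2 equation y'' = κ[y, y'] + 2y³ + x y + b₁ y + y b₂ + a, where κ = −1 − β, b₁ = c₂ + (2+β)c₁, b₂ = c₃ − βc₁, and a = c₄ − (1/2)·I. -/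
/-! Differentiate the first equation of the system, insert `g'` from the second, and eliminate
`g` using the first equation once more: what is left is an identity of noncommutative
polynomials in `f`, `f'` and the constants. -/

attribute [local instance] Matrix.linftyOpNormedRing Matrix.linftyOpNormedAlgebra

theorem hasDerivAt_deriv_of_riccati {𝕜 A : Type*} [NontriviallyNormedField 𝕜] [NormedRing A]
    [NormedAlgebra 𝕜 A] {c₁ g' : A} {f g : 𝕜 → A} {x : 𝕜}
    (hf : ∀ x, HasDerivAt f (-(f x) ^ 2 + g x - (x / 2) • 1 - c₁) x) (hg : HasDerivAt g g' x) :
    HasDerivAt (deriv f) (-(deriv f x * f x + f x * deriv f x) + g' - (1 / 2 : 𝕜) • 1) x := by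
  have hderiv : deriv f = fun x => -(f x) ^ 2 + g x - (x / 2) • 1 - c₁ :=
    funext fun x => (hf x).deriv
  have hsq : HasDerivAt (fun x => f x ^ 2) (deriv f x * f x + f x * deriv f x) x := by
    simpa only [pow_two, (hf x).deriv] using (hf x).fun_mul (hf x)
  have hhalf : HasDerivAt (fun x : 𝕜 => (x / 2) • (1 : A)) ((1 / 2 : 𝕜) • 1) x :=
    ((hasDerivAt_id x).div_const 2).smul_const 1
  have hrhs := ((hsq.fun_neg.fun_add hg).fun_sub hhalf).sub_const c₁
  rwa [← hderiv] at hrhs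

theorem riccati_second_deriv_eq_painleve2 {𝕜 A : Type*} [Field 𝕜] [CharZero 𝕜] [Ring A]
    [Algebra 𝕜 A] (β x : 𝕜) (c₁ c₂ c₃ c₄ : A) {y p g : A}
    (hp : p = -y ^ 2 + g - (x / 2) • 1 - c₁) :
    -(p * y + y * p) + (2 * (g * y) + β • (g * y - y * g) + c₂ * y + y * c₃ + c₄)
        - (1 / 2 : 𝕜) • 1 =
      (-1 - β) • (y * p - p * y) + 2 * y ^ 3 + x • y + (c₂ + (2 + β) • c₁) * y
        + y * (c₃ - β • c₁) + (c₄ - (1 / 2 : 𝕜) • 1) := by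
  subst hp
  simp only [mul_add, add_mul, mul_sub, sub_mul, neg_mul, mul_neg, smul_mul_assoc,
    mul_smul_comm, one_mul, mul_one, pow_succ, pow_zero, two_mul, mul_assoc]
  module

theorem matrix_P2_from_system_general (n : ℕ) (β : ℂ)
    (c₁ c₂ c₃ c₄ : Matrix (Fin n) (Fin n) ℂ)
    (f g : ℂ → Matrix (Fin n) (Fin n) ℂ)
    (hf : ∀ x : ℂ, HasDerivAt f (-(f x) ^ 2 + g x - (x / 2) • 1 - c₁) x)
    (hg : ∀ x : ℂ, HasDerivAt g
      (2 * (g x * f x) + β • (g x * f x - f x * g x) + c₂ * f x + f x * c₃ + c₄) x) :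
    ∀ x : ℂ, HasDerivAt (deriv f)
      ((-1 - β) • (f x * deriv f x - deriv f x * f x) + 2 * (f x) ^ 3 + x • f x
        + (c₂ + (2 + β) • c₁) * f x + f x * (c₃ - β • c₁) + (c₄ - (1 / 2 : ℂ) • 1)) x :=
  fun x => (hasDerivAt_deriv_of_riccati hf (hg x)).congr_deriv
    (riccati_second_deriv_eq_painleve2 β x c₁ c₂ c₃ c₄ (hf x).deriv)

/-- If `f, g : ℂ → Mat_n(ℂ)` solve the first-order system
`f' = −f² + g − (x/2)I − c₁`, `g' = 2gf + β(gf − fg) + c₂f + fc₃ + c₄`, then `y = f`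
satisfies the matrix Painlevé-2 equation
`y'' = κ[y, y'] + 2y³ + xy + b₁y + yb₂ + a` with `κ = −1 − β`, `b₁ = c₂ + (2+β)c₁`,
`b₂ = c₃ − βc₁`, `a = c₄ − (1/2)I`. -/
theorem matrix_P2_from_system (n : ℕ) (hn : 0 < n) (β : ℂ)
    (c₁ c₂ c₃ c₄ : Matrix (Fin n) (Fin n) ℂ)
    (f g : ℂ → Matrix (Fin n) (Fin n) ℂ)
    (hf : ∀ x : ℂ, HasDerivAt f (-(f x) ^ 2 + g x - (x / 2) • 1 - c₁) x)
    (hg : ∀ x : ℂ, HasDerivAt g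
      (2 * (g x * f x) + β • (g x * f x - f x * g x) + c₂ * f x + f x * c₃ + c₄) x) :
    ∀ x : ℂ, HasDerivAt (deriv f)
      ((-1 - β) • (f x * deriv f x - deriv f x * f x) + 2 * (f x) ^ 3 + x • f x
        + (c₂ + (2 + β) • c₁) * f x + f x * (c₃ - β • c₁) + (c₄ - (1 / 2 : ℂ) • 1)) x :=
  matrix_P2_from_system_general n β c₁ c₂ c₃ c₄ f g hf hg
end

section
/- Let n be a positive integer, γ₁, γ₂ ∈ ℂ, and b₁, b₂ ∈ Mat_n(ℂ) with [b₁, b₂] = 0. Suppose u, v : ℂ → Mat_n(ℂ) are differentiable and satisfy u' = −u² + uv + vu − 2zu + b₁u + ub₂ + γ₁·I and v' = −v² + vu + uv + 2zv − b₂v − vb₁ + γ₂·I for all z ∈ ℂ. Then the gauge-transformed functions U(z) = exp(z b₂) u(z) exp(−z b₂) and V(z) = exp(z b₂) v(z) exp(−z b₂) satisfy the canonical P₄⁰ system U' = −U² + UV + VU − 2zU + hU + γ₁·I, V' = −V² + VU + UV + 2zV − Vh + γ₂·I, with h = b₁ + b₂. -/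
/-!
Conjugation by `exp (z • b₂)` is an algebra automorphism fixing every matrix that commutes with
`b₂`, in particular `b₁` and `b₂`, and the derivative of `z ↦ exp (z • b) * f z * exp (-z • b)` is
the conjugate of `f' + [b, f]`. Adding `[b₂, u] = b₂ u - u b₂` to the right-hand side of the
equation for `u` turns `b₁ u + u b₂` into `(b₁ + b₂) u`, and adding `[b₂, v]` to that for `v` turns
`-b₂ v - v b₁` into `-v (b₁ + b₂)`; conjugating the resulting identities gives the system for
`U` and `V`.
-/

attribute [local instance] Matrix.linftyOpNormedAddCommGroup Matrix.linftyOpNormedSpace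

open NormedSpace

section

variable {𝕂 𝔸 : Type*} [RCLike 𝕂] [NormedRing 𝔸] [NormedAlgebra 𝕂 𝔸] [CompleteSpace 𝔸]

noncomputable def expSmulConj (b : 𝔸) (z : 𝕂) : 𝔸 ≃ₐ[𝕂] 𝔸 :=
  letI := invertibleExpOfMemBall (𝕂 := 𝕂) (x := z • b) (by simp [expSeries_radius_eq_top])
  MulSemiringAction.toAlgEquiv 𝕂 𝔸 (ConjAct.toConjAct (unitOfInvertible (exp (z • b))))

theorem expSmulConj_apply (b x : 𝔸) (z : 𝕂) :
    expSmulConj b z x = exp (z • b) * x * exp ((-z) • b) := by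
  rw [neg_smul]
  rfl

theorem exp_smul_mul_exp_neg_smul (b : 𝔸) (z : 𝕂) : exp (z • b) * exp ((-z) • b) = 1 := by
  simpa [expSmulConj_apply] using map_one (expSmulConj b z)

theorem expSmulConj_apply_of_commute {a b : 𝔸} (h : Commute a b) (z : 𝕂) :
    expSmulConj b z a = a := by
  rw [expSmulConj_apply, ← ((h.smul_right z).exp_right).eq, mul_assoc,
    exp_smul_mul_exp_neg_smul, mul_one]

theorem hasDerivAt_expSmulConj (b : 𝔸) {f : 𝕂 → 𝔸} {f' : 𝔸} {z : 𝕂}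
    (hf : HasDerivAt f f' z) :
    HasDerivAt (fun z => exp (z • b) * f z * exp ((-z) • b))
      (expSmulConj b z (f' + (b * f z - f z * b))) z := by
  have hE : HasDerivAt (fun z : 𝕂 => exp (z • b)) (exp (z • b) * b) z :=
    hasDerivAt_exp_smul_const b z
  have hF : HasDerivAt (fun z : 𝕂 => exp ((-z) • b)) (-(b * exp ((-z) • b))) z := by
    simpa [Function.comp_def] using (hasDerivAt_exp_smul_const' b (-z)).scomp z (hasDerivAt_neg z)
  refine ((hE.mul hf).mul hF).congr_deriv ?_
  rw [expSmulConj_apply]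
  simp only [Pi.mul_apply]
  noncomm_ring

end

attribute [local instance] Matrix.linftyOpNormedRing Matrix.linftyOpNormedAlgebra

theorem gauge_to_canonical_P40_general (n : ℕ) (γ₁ γ₂ : ℂ)
    (b₁ b₂ : Matrix (Fin n) (Fin n) ℂ) (hb : b₁ * b₂ - b₂ * b₁ = 0)
    (u v : ℂ → Matrix (Fin n) (Fin n) ℂ)
    (hu : ∀ z : ℂ, HasDerivAt u
      (-(u z) ^ 2 + u z * v z + v z * u z - (2 * z) • u z + b₁ * u z + u z * b₂ + γ₁ • 1) z)
    (hv : ∀ z : ℂ, HasDerivAt v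
      (-(v z) ^ 2 + v z * u z + u z * v z + (2 * z) • v z - b₂ * v z - v z * b₁ + γ₂ • 1) z) :
    (∀ z : ℂ, HasDerivAt (fun z : ℂ => exp (z • b₂) * u z * exp ((-z) • b₂))
      (-(exp (z • b₂) * u z * exp ((-z) • b₂)) ^ 2
        + (exp (z • b₂) * u z * exp ((-z) • b₂)) * (exp (z • b₂) * v z * exp ((-z) • b₂))
        + (exp (z • b₂) * v z * exp ((-z) • b₂)) * (exp (z • b₂) * u z * exp ((-z) • b₂))
        - (2 * z) • (exp (z • b₂) * u z * exp ((-z) • b₂))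
        + (b₁ + b₂) * (exp (z • b₂) * u z * exp ((-z) • b₂)) + γ₁ • 1) z) ∧
    (∀ z : ℂ, HasDerivAt (fun z : ℂ => exp (z • b₂) * v z * exp ((-z) • b₂))
      (-(exp (z • b₂) * v z * exp ((-z) • b₂)) ^ 2
        + (exp (z • b₂) * v z * exp ((-z) • b₂)) * (exp (z • b₂) * u z * exp ((-z) • b₂))
        + (exp (z • b₂) * u z * exp ((-z) • b₂)) * (exp (z • b₂) * v z * exp ((-z) • b₂))
        + (2 * z) • (exp (z • b₂) * v z * exp ((-z) • b₂))
        - (exp (z • b₂) * v z * exp ((-z) • b₂)) * (b₁ + b₂) + γ₂ • 1) z) := by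
  have fix₁ (z : ℂ) : expSmulConj b₂ z b₁ = b₁ :=
    expSmulConj_apply_of_commute (sub_eq_zero.mp hb) z
  have fix₂ (z : ℂ) : expSmulConj b₂ z b₂ = b₂ := expSmulConj_apply_of_commute (.refl b₂) z
  refine ⟨fun z => (hasDerivAt_expSmulConj b₂ (hu z)).congr_deriv ?_,
    fun z => (hasDerivAt_expSmulConj b₂ (hv z)).congr_deriv ?_⟩
  · calc _ = expSmulConj b₂ z
          (-(u z) ^ 2 + u z * v z + v z * u z - (2 * z) • u z + (b₁ + b₂) * u z + γ₁ • 1) := by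
          congr 1; noncomm_ring
      _ = _ := by
          simp only [map_add, map_sub, map_neg, map_mul, map_pow, map_smul, map_one, fix₁, fix₂,
            expSmulConj_apply]
          rfl
  · calc _ = expSmulConj b₂ z
          (-(v z) ^ 2 + v z * u z + u z * v z + (2 * z) • v z - v z * (b₁ + b₂) + γ₂ • 1) := by
          congr 1; noncomm_ring
      _ = _ := by
          simp only [map_add, map_sub, map_neg, map_mul, map_pow, map_smul, map_one, fix₁, fix₂,
            expSmulConj_apply]
          rfl

/-- A solution of the system (eq:case1tail) with commuting coefficient
matrices `b₁, b₂` is mapped by the gauge transformation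
`U = exp(z b₂) u exp(−z b₂)`, `V = exp(z b₂) v exp(−z b₂)` to a solution of the canonical
P₄⁰ system with `h = b₁ + b₂`. -/
theorem gauge_to_canonical_P40 (n : ℕ) (hn : 0 < n) (γ₁ γ₂ : ℂ)
    (b₁ b₂ : Matrix (Fin n) (Fin n) ℂ) (hb : b₁ * b₂ - b₂ * b₁ = 0)
    (u v : ℂ → Matrix (Fin n) (Fin n) ℂ)
    (hu : ∀ z : ℂ, HasDerivAt u
      (-(u z) ^ 2 + u z * v z + v z * u z - (2 * z) • u z + b₁ * u z + u z * b₂ + γ₁ • 1) z)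
    (hv : ∀ z : ℂ, HasDerivAt v
      (-(v z) ^ 2 + v z * u z + u z * v z + (2 * z) • v z - b₂ * v z - v z * b₁ + γ₂ • 1) z) :
    (∀ z : ℂ, HasDerivAt (fun z : ℂ => exp (z • b₂) * u z * exp ((-z) • b₂))
      (-(exp (z • b₂) * u z * exp ((-z) • b₂)) ^ 2
        + (exp (z • b₂) * u z * exp ((-z) • b₂)) * (exp (z • b₂) * v z * exp ((-z) • b₂))
        + (exp (z • b₂) * v z * exp ((-z) • b₂)) * (exp (z • b₂) * u z * exp ((-z) • b₂))
        - (2 * z) • (exp (z • b₂) * u z * exp ((-z) • b₂))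
        + (b₁ + b₂) * (exp (z • b₂) * u z * exp ((-z) • b₂)) + γ₁ • 1) z) ∧
    (∀ z : ℂ, HasDerivAt (fun z : ℂ => exp (z • b₂) * v z * exp ((-z) • b₂))
      (-(exp (z • b₂) * v z * exp ((-z) • b₂)) ^ 2
        + (exp (z • b₂) * v z * exp ((-z) • b₂)) * (exp (z • b₂) * u z * exp ((-z) • b₂))
        + (exp (z • b₂) * u z * exp ((-z) • b₂)) * (exp (z • b₂) * v z * exp ((-z) • b₂))
        + (2 * z) • (exp (z • b₂) * v z * exp ((-z) • b₂))
        - (exp (z • b₂) * v z * exp ((-z) • b₂)) * (b₁ + b₂) + γ₂ • 1) z) :=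
  gauge_to_canonical_P40_general n γ₁ γ₂ b₁ b₂ hb u v hu hv
end

section
/- Let n be a positive integer, γ ∈ ℂ, h ∈ Mat_n(ℂ), and let u, v : ℂ → Mat_n(ℂ) be differentiable functions with u(z) invertible for every z, satisfying the P₄¹ system u' = −u² + 2uv − 2zu + h and v' = −v² + 2uv + 2zv + h + γ·I for all z ∈ ℂ. Then y = u is twice differentiable and satisfies the matrix Painlevé-4 equation y'' = (1/2)(y' + h) y⁻¹ (y' − h) + (3/2)y³ − (1/2)[y', y] + 4z y² + 2z² y − 2y + (1/2)h y + (1/2)y h + 2γ y. -/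
attribute [local instance] Matrix.linftyOpNormedRing Matrix.linftyOpNormedAlgebra

/-!
Differentiating `u' = -u² + 2uv - 2zu + h` and substituting `v'` from the second equation
expresses `u''` as a noncommutative polynomial in `u` and `v`. To remove the inverse, factor
`u' - h = u (-u + 2v - 2z)`, so that `u⁻¹ (u' - h) = -u + 2v - 2z` and
`(u' + h) u⁻¹ (u' - h)` becomes polynomial as well; the P₄ equation is then an identity of
noncommutative polynomials in `u`, `v`, `h`.
-/

namespace P41

variable {𝕜 𝔸 : Type*}

def rhsU [CommRing 𝕜] [Ring 𝔸] [Algebra 𝕜 𝔸] (z : 𝕜) (h u v : 𝔸) : 𝔸 :=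
  -u ^ 2 + 2 * (u * v) - (2 * z) • u + h

def rhsV [CommRing 𝕜] [Ring 𝔸] [Algebra 𝕜 𝔸] (γ z : 𝕜) (h u v : 𝔸) : 𝔸 :=
  -v ^ 2 + 2 * (u * v) + (2 * z) • v + h + γ • 1

theorem hasDerivAt_rhsU [NontriviallyNormedField 𝕜] [NormedRing 𝔸] [NormedAlgebra 𝕜 𝔸]
    {u v : 𝕜 → 𝔸} {u' v' : 𝔸} {z : 𝕜} (h : 𝔸)
    (hu : HasDerivAt u u' z) (hv : HasDerivAt v v' z) :
    HasDerivAt (fun t => rhsU t h (u t) (v t))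
      (-(u' * u z + u z * u') + 2 * (u' * v z + u z * v') - (2 : 𝕜) • u z - (2 * z) • u') z := by
  have htwice : HasDerivAt (fun t : 𝕜 => 2 * t) 2 z := by
    simpa using (hasDerivAt_id z).const_mul (2 : 𝕜)
  have hsq : HasDerivAt (fun t => u t ^ 2) (u' * u z + u z * u') z := by
    simpa only [sq] using hu.fun_mul hu
  exact ((hsq.neg.add ((hu.fun_mul hv).const_mul 2)).sub (htwice.smul hu)).add_const h
    |>.congr_deriv (by abel)

theorem inv_mul_rhsU_sub [CommRing 𝕜] [Ring 𝔸] [Algebra 𝕜 𝔸] {z : 𝕜} {h u v ui : 𝔸}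
    (hui : ui * u = 1) :
    ui * (rhsU z h u v - h) = -u + 2 * v - (2 * z) • 1 := by
  have hfactor : rhsU z h u v - h = u * (-u + 2 * v - (2 * z) • 1) := by
    simp only [rhsU, mul_add, mul_sub, mul_neg, mul_smul_comm, mul_one, sq, two_mul]
    abel
  rw [hfactor, ← mul_assoc, hui, one_mul]

theorem secondDeriv_eq_p4 [Field 𝕜] [CharZero 𝕜] [Ring 𝔸] [Algebra 𝕜 𝔸] (γ z : 𝕜)
    {h u v ui u' v' : 𝔸} (hui : ui * u = 1)
    (hu' : u' = rhsU z h u v) (hv' : v' = rhsV γ z h u v) :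
    -(u' * u + u * u') + 2 * (u' * v + u * v') - (2 : 𝕜) • u - (2 * z) • u'
      = (1 / 2 : 𝕜) • ((u' + h) * ui * (u' - h)) + (3 / 2 : 𝕜) • u ^ 3
        - (1 / 2 : 𝕜) • (u' * u - u * u')
        + (4 * z) • u ^ 2 + (2 * z ^ 2) • u - (2 : 𝕜) • u
        + (1 / 2 : 𝕜) • (h * u) + (1 / 2 : 𝕜) • (u * h) + (2 * γ) • u := by
  rw [mul_assoc (u' + h), hu', inv_mul_rhsU_sub hui, hv']
  simp only [rhsU, rhsV, two_mul, mul_add, add_mul, mul_sub, sub_mul, neg_mul, mul_neg,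
    smul_mul_assoc, mul_smul_comm, smul_smul, mul_one, one_mul, pow_succ, pow_zero, smul_add,
    smul_sub, smul_neg, mul_assoc]
  module

end P41

open P41 in
theorem matrix_P4_equation_from_P41_general (n : ℕ) (γ : ℂ)
    (h : Matrix (Fin n) (Fin n) ℂ)
    (u v : ℂ → Matrix (Fin n) (Fin n) ℂ)
    (hinv : ∀ z : ℂ, IsUnit (u z))
    (hu : ∀ z : ℂ, HasDerivAt u
      (-(u z) ^ 2 + 2 * (u z * v z) - (2 * z) • u z + h) z)
    (hv : ∀ z : ℂ, HasDerivAt v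
      (-(v z) ^ 2 + 2 * (u z * v z) + (2 * z) • v z + h + γ • 1) z) :
    ∀ z : ℂ, HasDerivAt (deriv u)
      ((1 / 2 : ℂ) • ((deriv u z + h) * (u z)⁻¹ * (deriv u z - h))
        + (3 / 2 : ℂ) • (u z) ^ 3
        - (1 / 2 : ℂ) • (deriv u z * u z - u z * deriv u z)
        + (4 * z) • (u z) ^ 2 + (2 * z ^ 2) • u z - (2 : ℂ) • u z
        + (1 / 2 : ℂ) • (h * u z) + (1 / 2 : ℂ) • (u z * h) + (2 * γ) • u z) z := by
  intro z
  have hderiv : deriv u = fun t => rhsU t h (u t) (v t) := funext fun t => (hu t).deriv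
  have hui : (u z)⁻¹ * u z = 1 :=
    Matrix.nonsing_inv_mul _ ((Matrix.isUnit_iff_isUnit_det _).mp (hinv z))
  rw [hderiv]
  exact (hasDerivAt_rhsU h (hu z) (hv z)).congr_deriv
    (secondDeriv_eq_p4 γ z hui rfl rfl)

/-- If `u, v` solve the canonical P₄¹ system with `u(z)` invertible for all
`z`, then `y = u` satisfies the matrix Painlevé-4 equation
`y'' = (1/2)(y' + h)y⁻¹(y' − h) + (3/2)y³ − (1/2)[y', y] + 4zy² + 2z²y − 2y
       + (1/2)hy + (1/2)yh + 2γy`. -/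
theorem matrix_P4_equation_from_P41 (n : ℕ) (hn : 0 < n) (γ : ℂ)
    (h : Matrix (Fin n) (Fin n) ℂ)
    (u v : ℂ → Matrix (Fin n) (Fin n) ℂ)
    (hinv : ∀ z : ℂ, IsUnit (u z))
    (hu : ∀ z : ℂ, HasDerivAt u
      (-(u z) ^ 2 + 2 * (u z * v z) - (2 * z) • u z + h) z)
    (hv : ∀ z : ℂ, HasDerivAt v
      (-(v z) ^ 2 + 2 * (u z * v z) + (2 * z) • v z + h + γ • 1) z) :
    ∀ z : ℂ, HasDerivAt (deriv u)
      ((1 / 2 : ℂ) • ((deriv u z + h) * (u z)⁻¹ * (deriv u z - h))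
        + (3 / 2 : ℂ) • (u z) ^ 3
        - (1 / 2 : ℂ) • (deriv u z * u z - u z * deriv u z)
        + (4 * z) • (u z) ^ 2 + (2 * z ^ 2) • u z - (2 : ℂ) • u z
        + (1 / 2 : ℂ) • (h * u z) + (1 / 2 : ℂ) • (u z * h) + (2 * γ) • u z) z :=
  matrix_P4_equation_from_P41_general n γ h u v hinv hu hv
end

section
/- Let n be a positive integer, a ∈ Mat_n(ℂ), and let f, g : ℂ → Mat_n(ℂ) be differentiable functions satisfying f'(x) = −f² + g − (x/2)·I and g'(x) = 2fg + a for all x ∈ ℂ. Then y = f is twice differentiable and satisfies the matrix Painlevé-2 equation P₂¹: y'' = [y, y'] + 2y³ + x y + (a − (1/2)·I). -/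
attribute [local instance] Matrix.linftyOpNormedRing Matrix.linftyOpNormedAlgebra

/-! Differentiating the first equation once more and eliminating `g' = 2fg + a` and then
`g = f' + f² + (x/2)I` leaves exactly `P₂¹`; the commutator `[f, f']` comes from
`(f²)' = f'f + ff'` in the noncommutative algebra. -/

theorem HasDerivAt.neg_sq_add_sub_half_smul_one {𝕜 A : Type*} [NontriviallyNormedField 𝕜]
    [NormedRing A] [NormedAlgebra 𝕜 A] {f g : 𝕜 → A} {f' g' : A} {x : 𝕜}
    (hf : HasDerivAt f f' x) (hg : HasDerivAt g g' x) :
    HasDerivAt (fun t => -(f t) ^ 2 + g t - (t / 2) • (1 : A))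
      (-(f' * f x + f x * f') + g' - (1 / 2 : 𝕜) • 1) x := by
  have hsq : HasDerivAt (fun t => -(f t) ^ 2) (-(f' * f x + f x * f')) x := by
    simpa only [sq] using (hf.fun_mul hf).fun_neg
  have hlin : HasDerivAt (fun t : 𝕜 => (t / 2) • (1 : A)) ((1 / 2 : 𝕜) • 1) x := by
    simpa only [id, one_div] using ((hasDerivAt_id x).div_const 2).smul_const (1 : A)
  exact (hsq.add hg).sub hlin

theorem riccati_pair_derivative_eq_painleve2 {𝕜 A : Type*} [Field 𝕜] [CharZero 𝕜] [Ring A]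
    [Algebra 𝕜 A] (x : 𝕜) {y y' g g' a : A}
    (hy' : y' = -y ^ 2 + g - (x / 2) • 1) (hg' : g' = 2 * (y * g) + a) :
    -(y' * y + y * y') + g' - (1 / 2 : 𝕜) • 1
      = (y * y' - y' * y) + 2 * y ^ 3 + x • y + (a - (1 / 2 : 𝕜) • 1) := by
  subst hy' hg'
  simp only [mul_add, add_mul, mul_sub, sub_mul, mul_neg, neg_mul, mul_smul_comm, smul_mul_assoc,
    mul_one, one_mul, pow_succ, pow_zero, two_mul, mul_assoc]
  module

theorem matrix_P21_from_degeneration_general (n : ℕ)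
    (a : Matrix (Fin n) (Fin n) ℂ)
    (f g : ℂ → Matrix (Fin n) (Fin n) ℂ)
    (hf : ∀ x : ℂ, HasDerivAt f (-(f x) ^ 2 + g x - (x / 2) • 1) x)
    (hg : ∀ x : ℂ, HasDerivAt g (2 * (f x * g x) + a) x) :
    ∀ x : ℂ, HasDerivAt (deriv f)
      ((f x * deriv f x - deriv f x * f x) + 2 * (f x) ^ 3 + x • f x
        + (a - (1 / 2 : ℂ) • 1)) x := by
  intro x
  have hderiv : deriv f = fun t => -(f t) ^ 2 + g t - (t / 2) • 1 :=
    funext fun t => (hf t).deriv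
  rw [hderiv]
  refine ((hf x).neg_sq_add_sub_half_smul_one (hg x)).congr_deriv ?_
  exact riccati_pair_derivative_eq_painleve2 x rfl rfl

/-- If `f, g` solve `f' = −f² + g − (x/2)I`, `g' = 2fg + a`, then `y = f`
satisfies the matrix Painlevé-2 equation P₂¹: `y'' = [y, y'] + 2y³ + xy + (a − (1/2)I)`. -/
theorem matrix_P21_from_degeneration (n : ℕ) (hn : 0 < n)
    (a : Matrix (Fin n) (Fin n) ℂ)
    (f g : ℂ → Matrix (Fin n) (Fin n) ℂ)
    (hf : ∀ x : ℂ, HasDerivAt f (-(f x) ^ 2 + g x - (x / 2) • 1) x)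
    (hg : ∀ x : ℂ, HasDerivAt g (2 * (f x * g x) + a) x) :
    ∀ x : ℂ, HasDerivAt (deriv f)
      ((f x * deriv f x - deriv f x * f x) + 2 * (f x) ^ 3 + x • f x
        + (a - (1 / 2 : ℂ) • 1)) x :=
  matrix_P21_from_degeneration_general n a f g hf hg
end
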